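/- arXiv:1904.01737 — 8 statements merged into one kernel-verified Lean document; each statement's English description precedes it below -/
import Mathlib

section
/- Let n be a natural number and ω₁, …, ω_n pairwise distinct complex numbers. Then the tuple of formal power series (e^{ω₁ z}, …, e^{ω_n z}) ∈ ℂ[[z]]^n is perfect, i.e. every index m ∈ ℤ_{≥0}^n is normal with respect to (e^{ω₁ z}, …, e^{ω_n z}). In particular, for every l ∈ ℕ, the tuple (1, e^z, e^{2z}, …, e^{lz}) is perfect. -/
/-!
For `L = d/dz - c` one has `L (A e^{ωz}) = (A' + (ω - c) A) e^{ωz}` and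
`ord f ≤ ord (L f) + 1`.
Applying `L` with `c = ω_j` to `f = Σ A_i e^{ω_i z}` keeps the degree of every `A_i` with
`i ≠ j` (because the `ω_i` are distinct) and lowers that of `A_j` by one. Induction on
`Σ (deg A_i + 1)` (`Polynomial.weight`, in which `A_i = 0` counts `0`) therefore gives
`ord f < Σ (deg A_i + 1)`, which is at most the Padé bound `Σ (n_i + 1)`; so no
weight-`n` approximation has order beyond `Σ (n_i + 1) - 1`.
-/

open PowerSeries

/-- `(A₁,…,A_m)` is a weight-`nn` Padé approximant of `f = (f₁,…,f_m)`. -/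
def IsPadeApprox {K : Type*} [Field K] {m : ℕ} (f : Fin m → PowerSeries K)
    (nn : Fin m → ℕ) (A : Fin m → Polynomial K) : Prop :=
  A ≠ 0 ∧ (∀ j, (A j).degree ≤ (nn j : ℕ)) ∧
    (((∑ j, (nn j + 1)) - 1 : ℕ) : ℕ∞) ≤ (∑ j, (A j : PowerSeries K) * f j).order

/-- The index `nn` is normal with respect to `f`. -/
def IsNormal {K : Type*} [Field K] {m : ℕ} (f : Fin m → PowerSeries K)
    (nn : Fin m → ℕ) : Prop :=
  ∀ A : Fin m → Polynomial K, IsPadeApprox f nn A →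
    (∑ j, (A j : PowerSeries K) * f j).order = (((∑ j, (nn j + 1)) - 1 : ℕ) : ℕ∞)

/-- `f` is perfect: every index is normal with respect to `f`. -/
def IsPerfect {K : Type*} [Field K] {m : ℕ} (f : Fin m → PowerSeries K) : Prop :=
  ∀ nn : Fin m → ℕ, IsNormal f nn

/-- The exponential formal power series `e^{ωz} = Σ_k ω^k z^k / k!`. -/
noncomputable def expPS (ω : ℂ) : PowerSeries ℂ :=
  PowerSeries.mk fun k => ω ^ k / (k.factorial : ℂ)

open Polynomial

namespace Polynomial

variable {R : Type*} [CommRing R]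

open Classical in
noncomputable def weight (p : R[X]) : ℕ := if p = 0 then 0 else p.natDegree + 1

@[simp]
theorem weight_zero : weight (0 : R[X]) = 0 := by simp [weight]

theorem weight_of_ne_zero {p : R[X]} (hp : p ≠ 0) : weight p = p.natDegree + 1 := by
  simp [weight, hp]

theorem weight_eq_zero_iff {p : R[X]} : weight p = 0 ↔ p = 0 := by
  by_cases hp : p = 0 <;> simp [weight, hp]

theorem weight_le_of_degree_le {p : R[X]} {n : ℕ} (h : p.degree ≤ n) : weight p ≤ n + 1 := by
  by_cases hp : p = 0
  · simp [hp]
  · rw [weight_of_ne_zero hp]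
    exact Nat.succ_le_succ (natDegree_le_of_degree_le h)

theorem weight_derivative [IsDomain R] [CharZero R] (p : R[X]) :
    weight (derivative p) = weight p - 1 := by
  by_cases hp : p = 0
  · simp [hp]
  by_cases hp₀ : p.natDegree = 0
  · simp [derivative_of_natDegree_zero hp₀, weight_of_ne_zero hp, hp₀]
  · have hp' : derivative p ≠ 0 := mt derivative_eq_zero.mp hp₀
    rw [weight_of_ne_zero hp, weight_of_ne_zero hp', natDegree_derivative]
    omega

theorem weight_derivative_add_C_mul [IsDomain R] {d : R} (hd : d ≠ 0) (p : R[X]) :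
    weight (derivative p + C d * p) = weight p := by
  by_cases hp : p = 0
  · simp [hp]
  have hdeg : (derivative p + C d * p).degree = p.degree := by
    rw [degree_add_eq_right_of_degree_lt] <;> rw [degree_C_mul hd]
    exact degree_derivative_lt hp
  have hq : derivative p + C d * p ≠ 0 := by
    rw [← degree_ne_bot, hdeg, degree_ne_bot]
    exact hp
  rw [weight_of_ne_zero hp, weight_of_ne_zero hq, natDegree_eq_of_degree_eq hdeg]

theorem sum_weight_derivative_add_C_mul [IsDomain R] [CharZero R] {ι : Type*} [Fintype ι]
    {ω : ι → R} (hω : Function.Injective ω) {A : ι → R[X]} {j : ι} (hj : A j ≠ 0) :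
    ∑ i, weight (derivative (A i) + C (ω i - ω j) * A i) + 1 = ∑ i, weight (A i) := by
  classical
  have hj_pos : 0 < weight (A j) := Nat.pos_of_ne_zero (weight_eq_zero_iff.not.mpr hj)
  rw [← Finset.add_sum_erase _ _ (Finset.mem_univ j),
    ← Finset.add_sum_erase _ _ (Finset.mem_univ j),
    Finset.sum_congr rfl fun i hi =>
      weight_derivative_add_C_mul (sub_ne_zero.mpr (hω.ne (Finset.ne_of_mem_erase hi))) (A i),
    sub_self, map_zero, zero_mul, add_zero, weight_derivative]
  omega

end Polynomial

namespace PowerSeries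

variable {R : Type*} [CommRing R]

theorem order_coe_lt_weight {p : R[X]} (hp : p ≠ 0) : (p : R⟦X⟧).order < p.weight := by
  rw [weight_of_ne_zero hp, Nat.cast_add, Nat.cast_one, ENat.lt_natCast_add_one_iff]
  refine order_le _ ?_
  rwa [Polynomial.coeff_coe, coeff_natDegree, leadingCoeff_ne_zero]

theorem order_le_order_derivative_sub_C_mul_add_one (f : R⟦X⟧) (c : R) :
    f.order ≤ (d⁄dX R f - C c * f).order + 1 := by
  set g := d⁄dX R f - C c * f
  cases h : g.order with
  | top => simp
  | coe m =>
    have hm : coeff m g ≠ 0 := (order_eq_nat.mp h).1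
    have hcoeff : coeff m g = coeff (m + 1) f * (m + 1) - c * coeff m f := by
      simp [g, coeff_derivative]
    by_cases hf : coeff (m + 1) f = 0
    · have : coeff m f ≠ 0 := by
        rintro hf'
        exact hm (by rw [hcoeff, hf, hf']; ring)
      exact (order_le m this).trans (by norm_cast; omega)
    · exact_mod_cast order_le (m + 1) hf

end PowerSeries

theorem order_expPS (ω : ℂ) : (expPS ω).order = 0 :=
  nonpos_iff_eq_zero.mp (order_le 0 (by simp [expPS]))

theorem derivative_expPS (ω : ℂ) : d⁄dX ℂ (expPS ω) = PowerSeries.C ω * expPS ω := by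
  ext k
  simp only [expPS, PowerSeries.coeff_derivative, PowerSeries.coeff_C_mul, coeff_mk,
    Nat.factorial_succ, pow_succ]
  push_cast
  field_simp

theorem derivative_sub_C_mul_polynomial_mul_expPS (c ω : ℂ) (p : ℂ[X]) :
    d⁄dX ℂ (p * expPS ω) - PowerSeries.C c * (p * expPS ω) =
      ((derivative p + Polynomial.C (ω - c) * p : ℂ[X]) : ℂ⟦X⟧) * expPS ω := by
  rw [Derivation.leibniz, derivative_coe, derivative_expPS, smul_eq_mul, smul_eq_mul]
  push_cast [map_sub]
  ring

theorem derivative_sub_C_mul_sum_polynomial_mul_expPS {ι : Type*} [Fintype ι] (c : ℂ)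
    (ω : ι → ℂ) (A : ι → ℂ[X]) :
    d⁄dX ℂ (∑ i, (A i : ℂ⟦X⟧) * expPS (ω i))
        - PowerSeries.C c * ∑ i, (A i : ℂ⟦X⟧) * expPS (ω i) =
      ∑ i, ((derivative (A i) + Polynomial.C (ω i - c) * A i : ℂ[X]) : ℂ⟦X⟧) *
        expPS (ω i) := by
  simp only [map_sum, Finset.mul_sum, ← Finset.sum_sub_distrib,
    derivative_sub_C_mul_polynomial_mul_expPS]

theorem order_sum_polynomial_mul_expPS_lt {ι : Type*} [Fintype ι] {ω : ι → ℂ}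
    (hω : Function.Injective ω) {A : ι → ℂ[X]} (hA : A ≠ 0) :
    (∑ i, (A i : ℂ⟦X⟧) * expPS (ω i)).order < ∑ i, (A i).weight := by
  classical
  obtain ⟨n, hn⟩ : ∃ n, ∑ i, (A i).weight = n := ⟨_, rfl⟩
  induction n generalizing A with
  | zero =>
    refine absurd (_root_.funext fun i => weight_eq_zero_iff.mp ?_) hA
    exact Finset.sum_eq_zero_iff.mp hn i (Finset.mem_univ i)
  | succ n ih =>
    obtain ⟨j, hj⟩ : ∃ j, A j ≠ 0 := Function.ne_iff.mp hA
    have hj_le : (A j).weight ≤ n + 1 :=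
      hn ▸ Finset.single_le_sum (fun i _ => Nat.zero_le (A i).weight) (Finset.mem_univ j)
    by_cases hsingle : ∀ i ≠ j, A i = 0
    · rw [Finset.sum_eq_single j (fun i _ hi => by simp [hsingle i hi]) (by simp), order_mul,
        order_expPS, add_zero, hn]
      exact (order_coe_lt_weight hj).trans_le (by exact_mod_cast hj_le)
    obtain ⟨k, hkj, hk⟩ : ∃ k ≠ j, A k ≠ 0 := by simpa using hsingle
    set B : ι → ℂ[X] := fun i => derivative (A i) + Polynomial.C (ω i - ω j) * A i
    have hsum : ∑ i, (B i).weight = n := by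
      have : ∑ i, (B i).weight + 1 = _ := sum_weight_derivative_add_C_mul hω hj
      omega
    have hB : B ≠ 0 := fun h => hk <| weight_eq_zero_iff.mp <| by
      rw [← weight_derivative_add_C_mul (sub_ne_zero.mpr (hω.ne hkj))]
      exact weight_eq_zero_iff.mpr (congrFun h k)
    rw [hn]
    calc _ ≤ _ + 1 := order_le_order_derivative_sub_C_mul_add_one _ (ω j)
      _ ≤ n := by
        rw [derivative_sub_C_mul_sum_polynomial_mul_expPS]
        exact Order.add_one_le_of_lt (hsum ▸ ih hB hsum)
      _ < (n + 1 : ℕ) := by exact_mod_cast n.lt_succ_self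

theorem isPerfect_expPS {m : ℕ} {ω : Fin m → ℂ} (hω : Function.Injective ω) :
    IsPerfect fun i => expPS (ω i) := by
  rintro nn A ⟨hA, hdeg, hord⟩
  refine le_antisymm ?_ hord
  have hle : ∑ i, (A i).weight ≤ ∑ i, (nn i + 1) :=
    Finset.sum_le_sum fun i _ => weight_le_of_degree_le (hdeg i)
  have hlt := (order_sum_polynomial_mul_expPS_lt hω hA).trans_le (Nat.cast_le.mpr hle)
  simpa using ENat.le_sub_one_of_lt hlt

theorem exp_perfect_general (n : ℕ) (ω : Fin n → ℂ) (hω : Function.Injective ω) :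
    IsPerfect (fun h => expPS (ω h)) ∧
      ∀ l : ℕ, IsPerfect (fun i : Fin (l + 1) => expPS ((i : ℕ) : ℂ)) :=
  ⟨isPerfect_expPS hω, fun _ => isPerfect_expPS fun _ _ h => Fin.ext (Nat.cast_injective h)⟩

/-- for pairwise distinct `ω₁,…,ω_n`, the tuple `(e^{ω₁z},…,e^{ω_nz})` is
perfect; in particular `(1, e^z, …, e^{lz})` is perfect for every `l`. -/
theorem exp_perfect (n : ℕ) (hn : 0 < n) (ω : Fin n → ℂ) (hω : Function.Injective ω) :
    IsPerfect (fun h => expPS (ω h)) ∧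
      ∀ l : ℕ, IsPerfect (fun i : Fin (l + 1) => expPS ((i : ℕ) : ℂ)) :=
  exp_perfect_general n ω hω
end

section
/- Let n ∈ ℕ, ω₁, …, ω_n pairwise distinct complex numbers, and m = (m₁, …, m_n) ∈ ℤ_{≥0}^n. Let {a_{h,j}}_{1≤h≤n, 1≤j≤m_h+1} be the complex numbers determined by the partial fraction decomposition 1 / ∏_{h=1}^n (x − ω_h)^{m_h + 1} = Σ_{h=1}^n Σ_{j=1}^{m_h + 1} a_{h,j} / (x − ω_h)^j. Then the formal power series S(z) = Σ_{h=1}^n ( Σ_{j=0}^{m_h} a_{h,j+1} · z^j / j! ) · e^{ω_h z} is a weight-m Padé approximation of (e^{ω₁ z}, …, e^{ω_n z}). -/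
open PowerSeries Polynomial

/-!
Put `D = Σ_h (m_h + 1)` and substitute `x = 1/t` in the partial fraction identity: it becomes
`t^D / ∏_h (1 - ω_h t)^{m_h+1} = Σ_{h,j} a_{h,j+1} t^{j+1} / (1 - ω_h t)^{j+1}`,
an identity of power series in `t` whose left side is divisible by `t^D`. Now
`t^j / (1 - ω t)^{j+1} = Σ_k C(k,j) ω^{k-j} t^k`, while `k! [z^k] (z^j / j!) e^{ωz} = C(k,j) ω^{k-j}`.
Hence `k!` times the `k`-th coefficient of `S(z)` is the `(k+1)`-st coefficient of the right side,
which vanishes for `k + 1 < D`. The `a_{h,j}` cannot all vanish, as `t^D ≠ 0`.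
-/

open Finset

section GeometricSeries

variable {R : Type*} [CommRing R]

theorem one_sub_C_mul_X_pow_mul_rescale_invOneSubPow (w : R) (d : ℕ) :
    (1 - PowerSeries.C w * PowerSeries.X) ^ d * rescale w (invOneSubPow R d : R⟦X⟧) = 1 := by
  rw [← rescale_X, ← map_one (rescale w), ← map_sub, ← map_pow, ← map_mul,
    ← invOneSubPow_inv_eq_one_sub_pow, Units.inv_val, map_one]

theorem coeff_X_pow_mul_rescale_invOneSubPow (w : R) (j k : ℕ) :
    PowerSeries.coeff k (PowerSeries.X ^ j * rescale w (invOneSubPow R (j + 1) : R⟦X⟧)) =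
      k.choose j * w ^ (k - j) := by
  rw [PowerSeries.coeff_X_pow_mul', invOneSubPow_val_succ_eq_mk_add_choose, coeff_rescale,
    coeff_mk]
  split_ifs with h
  · rw [Nat.add_sub_cancel' h]; ring
  · simp [Nat.choose_eq_zero_of_lt (not_le.mp h)]

end GeometricSeries

section PolynomialDivision

variable {K : Type*} [Field K] {p q : K[X]}

theorem Polynomial.eval_div_of_dvd (hpq : p ∣ q) {t : K} (ht : p.eval t ≠ 0) :
    (q / p).eval t = q.eval t / p.eval t := by
  have hp : p ≠ 0 := by rintro rfl; simp at ht
  rw [eq_div_iff ht, mul_comm, ← eval_mul, EuclideanDomain.mul_div_cancel' hp hpq]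

theorem Polynomial.coe_div_of_dvd (hpq : p ∣ q) {g : K⟦X⟧} (hg : (p : K⟦X⟧) * g = 1) :
    ((q / p : K[X]) : K⟦X⟧) = g * q := by
  have hp : p ≠ 0 := by rintro rfl; simp at hg
  conv_rhs => rw [← EuclideanDomain.mul_div_cancel' hp hpq]
  rw [Polynomial.coe_mul, ← mul_assoc, mul_comm g, hg, one_mul]

end PolynomialDivision

section PartialFractions

variable {K : Type*} [Field K] {ι : Type*} [Fintype ι] (ω : ι → K) (m : ι → ℕ) (a : ι → ℕ → K)

def IsPartialFractionCoeffs : Prop :=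
  ∀ x : K, (∀ h, x ≠ ω h) →
    (∏ h, (x - ω h) ^ (m h + 1))⁻¹ =
      ∑ h, ∑ j ∈ range (m h + 1), a h (j + 1) / (x - ω h) ^ (j + 1)

/-- `t ^ D * Q (1 / t)` for `Q x = ∏ h, (x - ω h) ^ (m h + 1)` of degree `D`. -/
noncomputable def reverseDenom : K[X] :=
  ∏ h, (1 - Polynomial.C (ω h) * Polynomial.X) ^ (m h + 1)

theorem eval_zero_reverseDenom : (reverseDenom ω m).eval 0 = 1 := by
  simp [reverseDenom, eval_prod]

theorem reverseDenom_ne_zero : reverseDenom ω m ≠ 0 := fun h0 => by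
  simpa [h0] using eval_zero_reverseDenom ω m

theorem one_sub_C_mul_X_pow_dvd_reverseDenom (h : ι) {j : ℕ} (hj : j ≤ m h) :
    (1 - Polynomial.C (ω h) * Polynomial.X) ^ (j + 1) ∣ reverseDenom ω m :=
  (pow_dvd_pow _ (by omega)).trans (dvd_prod_of_mem _ (mem_univ h))

variable {ω m a}

theorem IsPartialFractionCoeffs.eval_reverseDenom (ha : IsPartialFractionCoeffs ω m a) {t : K}
    (ht : t ≠ 0) (hQ : (reverseDenom ω m).eval t ≠ 0) :
    t ^ (∑ h, (m h + 1)) / (reverseDenom ω m).eval t =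
      ∑ h, ∑ j ∈ range (m h + 1), a h (j + 1) * t ^ (j + 1) / (1 - ω h * t) ^ (j + 1) := by
  simp only [reverseDenom, eval_prod, eval_pow, eval_sub, eval_one, eval_mul, eval_C,
    eval_X] at hQ ⊢
  have hu : ∀ h, 1 - ω h * t ≠ 0 := fun h =>
    pow_ne_zero_iff (Nat.succ_ne_zero _) |>.mp (prod_ne_zero_iff.mp hQ h (mem_univ h))
  have hx : ∀ h, t⁻¹ - ω h = (1 - ω h * t) / t := fun h => by field_simp
  simpa only [hx, div_pow, prod_div_distrib, prod_pow_eq_pow_sum, inv_div, div_div_eq_mul_div]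
    using ha t⁻¹ fun h e => hu h (by rw [← e]; field_simp; ring)

variable [Infinite K]

theorem IsPartialFractionCoeffs.sum_eq_X_pow (ha : IsPartialFractionCoeffs ω m a) :
    ∑ h, ∑ j ∈ range (m h + 1), Polynomial.C (a h (j + 1)) * Polynomial.X ^ (j + 1) *
        (reverseDenom ω m / (1 - Polynomial.C (ω h) * Polynomial.X) ^ (j + 1)) =
      Polynomial.X ^ (∑ h, (m h + 1)) := by
  apply eq_of_infinite_eval_eq
  refine Set.Infinite.mono ?_ ((Set.finite_singleton 0).union
    (finite_setOfPred_isRoot (reverseDenom_ne_zero ω m))).infinite_compl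
  intro t ht
  simp only [Set.mem_compl_iff, Set.mem_union, Set.mem_singleton_iff, Set.mem_ofPred_eq,
    IsRoot.def, not_or] at ht
  obtain ⟨ht, hQt⟩ := ht
  have hreverse := ha.eval_reverseDenom ht hQt
  rw [div_eq_iff hQt] at hreverse
  simp only [Set.mem_ofPred_eq, eval_finsetSum, eval_pow, eval_X, hreverse, sum_mul]
  refine sum_congr rfl fun h _ => sum_congr rfl fun j hj => ?_
  have hdvd := one_sub_C_mul_X_pow_dvd_reverseDenom ω m h (mem_range_succ_iff.mp hj)
  rw [eval_mul, eval_div_of_dvd hdvd (ne_zero_of_dvd_ne_zero hQt (eval_dvd hdvd))]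
  simp only [eval_mul, eval_pow, eval_sub, eval_one, eval_C, eval_X]
  ring

theorem IsPartialFractionCoeffs.exists_ne_zero (ha : IsPartialFractionCoeffs ω m a) :
    ∃ h, ∃ j ≤ m h, a h (j + 1) ≠ 0 := by
  by_contra! hzero
  have hsum := ha.sum_eq_X_pow
  rw [sum_eq_zero fun h _ => sum_eq_zero fun j hj => by
    rw [hzero h j (mem_range_succ_iff.mp hj), C_0, zero_mul, zero_mul]] at hsum
  exact pow_ne_zero _ X_ne_zero hsum.symm

theorem IsPartialFractionCoeffs.X_pow_dvd_sum (ha : IsPartialFractionCoeffs ω m a) :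
    (PowerSeries.X : K⟦X⟧) ^ (∑ h, (m h + 1)) ∣
      ∑ h, ∑ j ∈ range (m h + 1), PowerSeries.C (a h (j + 1)) * PowerSeries.X ^ (j + 1) *
        rescale (ω h) (invOneSubPow K (j + 1) : K⟦X⟧) := by
  have hQ : IsUnit (reverseDenom ω m : K⟦X⟧) := by
    rw [isUnit_iff_constantCoeff, ← coeff_zero_eq_constantCoeff_apply, Polynomial.coeff_coe,
      coeff_zero_eq_eval_zero, eval_zero_reverseDenom]
    exact isUnit_one
  have hcoe := congrArg (coeToPowerSeries.ringHom (R := K)) ha.sum_eq_X_pow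
  simp only [map_sum, map_mul, map_pow, coeToPowerSeries.ringHom_apply,
    Polynomial.coe_C, Polynomial.coe_X] at hcoe
  rw [← hQ.dvd_mul_right, sum_mul, ← hcoe]
  refine dvd_of_eq (sum_congr rfl fun h _ => ?_)
  rw [sum_mul]
  refine sum_congr rfl fun j hj => ?_
  have hinv : (((1 - Polynomial.C (ω h) * Polynomial.X) ^ (j + 1) : K[X]) : K⟦X⟧) *
      rescale (ω h) (invOneSubPow K (j + 1) : K⟦X⟧) = 1 := by
    push_cast
    exact one_sub_C_mul_X_pow_mul_rescale_invOneSubPow (ω h) (j + 1)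
  rw [coe_div_of_dvd (one_sub_C_mul_X_pow_dvd_reverseDenom ω m h (mem_range_succ_iff.mp hj)) hinv]
  ring

theorem IsPartialFractionCoeffs.sum_choose_mul_pow_eq_zero (ha : IsPartialFractionCoeffs ω m a)
    {k : ℕ} (hk : k + 1 < ∑ h, (m h + 1)) :
    ∑ h, ∑ j ∈ range (m h + 1), a h (j + 1) * k.choose j * ω h ^ (k - j) = 0 := by
  simpa only [map_sum, mul_assoc, PowerSeries.coeff_C_mul, pow_succ',
    PowerSeries.coeff_succ_X_mul, coeff_X_pow_mul_rescale_invOneSubPow]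
    using PowerSeries.X_pow_dvd_iff.mp ha.X_pow_dvd_sum (k + 1) hk

end PartialFractions

section Exponential

open Nat

theorem factorial_mul_coeff_X_pow_mul_expPS (w : ℂ) (j k : ℕ) :
    (k ! : ℂ) * PowerSeries.coeff k (PowerSeries.X ^ j * expPS w) =
      j ! * k.choose j * w ^ (k - j) := by
  rw [PowerSeries.coeff_X_pow_mul', expPS, coeff_mk]
  split_ifs with h
  · rw [← choose_mul_factorial_mul_factorial h]
    have : ((k - j)! : ℂ) ≠ 0 := mod_cast factorial_ne_zero _
    push_cast
    field_simp
  · simp [choose_eq_zero_of_lt (not_le.mp h)]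

theorem factorial_mul_coeff_sum_mul_expPS (s : Finset ℕ) (c : ℕ → ℂ) (w : ℂ) (k : ℕ) :
    (k ! : ℂ) * PowerSeries.coeff k
        (((∑ j ∈ s, Polynomial.C (c j / j !) * Polynomial.X ^ j : ℂ[X]) : ℂ⟦X⟧) * expPS w) =
      ∑ j ∈ s, c j * k.choose j * w ^ (k - j) := by
  rw [← coeToPowerSeries.ringHom_apply]
  simp only [map_sum, map_mul, map_pow, coeToPowerSeries.ringHom_apply, Polynomial.coe_C,
    Polynomial.coe_X, sum_mul, mul_sum]
  refine sum_congr rfl fun j _ => ?_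
  rw [mul_assoc, PowerSeries.coeff_C_mul, mul_left_comm, factorial_mul_coeff_X_pow_mul_expPS]
  have : (j ! : ℂ) ≠ 0 := mod_cast factorial_ne_zero j
  field_simp

end Exponential

theorem hermite_pade_exp_general (n : ℕ) (ω : Fin n → ℂ)
    (m : Fin n → ℕ) (a : Fin n → ℕ → ℂ)
    (ha : ∀ x : ℂ, (∀ h, x ≠ ω h) →
      (∏ h, (x - ω h) ^ (m h + 1))⁻¹ =
        ∑ h, ∑ j ∈ Finset.range (m h + 1), a h (j + 1) / (x - ω h) ^ (j + 1)) :
    IsPadeApprox (fun h => expPS (ω h)) m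
      (fun h => ∑ j ∈ Finset.range (m h + 1),
        Polynomial.C (a h (j + 1) / (j.factorial : ℂ)) * Polynomial.X ^ j) := by
  have hpf : IsPartialFractionCoeffs ω m a := ha
  refine ⟨fun hA => ?_, fun h => ?_, ?_⟩
  · obtain ⟨h, j, hj, hne⟩ := hpf.exists_ne_zero
    have hcoeff := congrArg (fun A => (A h).coeff j) hA
    simp [finsetSum_coeff, Nat.lt_succ_iff.mpr hj, hne, Nat.factorial_ne_zero] at hcoeff
  · refine (degree_sum_le _ _).trans (Finset.sup_le fun j hj => ?_)
    exact (degree_C_mul_X_pow_le _ _).trans (mod_cast mem_range_succ_iff.mp hj)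
  · refine PowerSeries.nat_le_order _ _ fun k hk => ?_
    have hk! : (k.factorial : ℂ) ≠ 0 := mod_cast Nat.factorial_ne_zero k
    refine (mul_eq_zero.mp ?_).resolve_left hk!
    rw [map_sum, mul_sum]
    simp only [factorial_mul_coeff_sum_mul_expPS]
    exact hpf.sum_choose_mul_pow_eq_zero (by omega)

/-- Hermite: if the `a h j` (for `1 ≤ j ≤ m_h + 1`) are the partial fraction
coefficients of `1 / ∏_h (x − ω_h)^{m_h+1}`, then
`S(z) = Σ_h (Σ_{j=0}^{m_h} a_{h,j+1} z^j/j!) e^{ω_h z}` is a weight-`m` Padé approximation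
of `(e^{ω₁z},…,e^{ω_nz})`, i.e. the polynomials `Σ_{j=0}^{m_h} (a_{h,j+1}/j!) z^j` form a
weight-`m` Padé approximant. -/
theorem hermite_pade_exp (n : ℕ) (hn : 0 < n) (ω : Fin n → ℂ) (hω : Function.Injective ω)
    (m : Fin n → ℕ) (a : Fin n → ℕ → ℂ)
    (ha : ∀ x : ℂ, (∀ h, x ≠ ω h) →
      (∏ h, (x - ω h) ^ (m h + 1))⁻¹ =
        ∑ h, ∑ j ∈ Finset.range (m h + 1), a h (j + 1) / (x - ω h) ^ (j + 1)) :
    IsPadeApprox (fun h => expPS (ω h)) m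
      (fun h => ∑ j ∈ Finset.range (m h + 1),
        Polynomial.C (a h (j + 1) / (j.factorial : ℂ)) * Polynomial.X ^ j) :=
  hermite_pade_exp_general n ω m a ha
end

section
/- Let K be a field of characteristic 0 and f(z) ∈ K[[z]]. Suppose there exists g(z) ∈ K[[z]] with f(g(z)) = g(f(z)) = z (compositional inverses, so f(0) = g(0) = 0). Put g̃(z) = g(z) + 1 and assume that the tuple (1, g̃(z), g̃²(z), …, g̃^l(z)) is perfect for every l ∈ ℕ. Then for every m ∈ ℤ_{≥2}, every nonincreasing index n = (n₀, n₁, …, n_{m−1}) ∈ ℤ_{≥0}^m with n₀ ≥ n₁ ≥ … ≥ n_{m−1} is normal with respect to (1, f(z), f²(z), …, f^{m−1}(z)). -/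
open PowerSeries

/-- Composition `f(g(z))` of formal power series, meaningful when `g(0) = 0`
(then the coefficient of `z^n` in `Σ_i f_i g^i` only involves `i ≤ n`). -/
noncomputable def PScomp {K : Type*} [CommRing K] (f g : PowerSeries K) : PowerSeries K :=
  PowerSeries.mk fun n =>
    ∑ i ∈ Finset.range (n + 1), (PowerSeries.coeff i f) * (PowerSeries.coeff n (g ^ i))

/-!
Substituting `g` into `R = ∑ⱼ Aⱼ fʲ` gives `∑ⱼ Aⱼ(g) zʲ`; this preserves the order of `R`, because
substituting `f` back undoes it and neither substitution can lower an order. Write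
`Aⱼ(w) = Ãⱼ(w + 1)` (a Taylor shift, which keeps degrees) and collect the double sum
`∑ⱼ Ãⱼ(g + 1) zʲ` by powers of `g + 1` instead of powers of `z`: it becomes `∑ₖ Bₖ(z) (g + 1)ᵏ`.
When `n` is nonincreasing, the coefficient of `zʲ (g + 1)ᵏ` can be nonzero only if `k ≤ nⱼ`, and
the `j` with `k ≤ nⱼ` form an initial segment, so `deg Bₖ` is bounded by the conjugate partition
of `n` (lowered by one); conjugation preserves the total weight. Hence `R ∘ g` is a Padé form of
`(1, g + 1, …, (g + 1)^n₀)` of the same weight, and perfectness of that tuple pins down its order.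
-/

section Composition

variable {R : Type*} [CommRing R] {f g : R⟦X⟧}

theorem PScomp_eq_subst (hg : constantCoeff g = 0) : PScomp f g = f.subst g := by
  ext n
  rw [coeff_subst' (HasSubst.of_constantCoeff_zero' hg),
    finsum_eq_sum_of_support_subset (s := Finset.range (n + 1))]
  · simp [PScomp]
  · intro d hd
    contrapose! hd
    rw [Finset.coe_range, Set.mem_Iio, not_lt] at hd
    rw [Function.notMem_support, coeff_of_lt_order n
      ((Nat.cast_lt.mpr hd).trans_le (le_order_pow_of_constantCoeff_eq_zero d hg)), smul_zero]

theorem constantCoeff_eq_zero_of_PScomp_eq_X (h : PScomp f g = X) : constantCoeff f = 0 := by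
  simpa [PScomp] using congrArg (coeff 0) h

theorem order_subst_of_subst_eq_X (hf : constantCoeff f = 0) (hg : constantCoeff g = 0)
    (hgf : g.subst f = (X : R⟦X⟧)) (φ : R⟦X⟧) : order (φ.subst g : R⟦X⟧) = φ.order := by
  refine le_antisymm ?_ (le_order_subst_left' hg)
  have h := le_order_subst_left' (φ := (φ.subst g : R⟦X⟧)) hf
  rwa [subst_comp_subst_apply (HasSubst.of_constantCoeff_zero' hg)
    (HasSubst.of_constantCoeff_zero' hf), hgf, X_subst] at h

theorem subst_sum_coe_mul_pow {m : ℕ} (hg : constantCoeff g = 0) (A : Fin m → Polynomial R) :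
    ((∑ j, (A j : R⟦X⟧) * f ^ (j : ℕ)).subst g : R⟦X⟧) =
      ∑ j, Polynomial.aeval g (A j) * (f.subst g : R⟦X⟧) ^ (j : ℕ) := by
  simp only [← coe_substAlgHom (HasSubst.of_constantCoeff_zero' hg), map_sum, map_mul, map_pow,
    substAlgHom_coe]

end Composition

section ConjugateIndex

variable {m : ℕ} {nn : Fin m → ℕ}

def conjIndex (nn : Fin m → ℕ) (k : ℕ) : ℕ :=
  (Finset.univ.filter fun j => k ≤ nn j).card - 1

theorem le_conjIndex (hnn : Antitone nn) {k : ℕ} {j : Fin m} (hj : k ≤ nn j) :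
    (j : ℕ) ≤ conjIndex nn k := by
  have hsub : Finset.Iic j ⊆ Finset.univ.filter fun i => k ≤ nn i := fun i hi =>
    Finset.mem_filter.mpr ⟨Finset.mem_univ i, hj.trans (hnn (Finset.mem_Iic.mp hi))⟩
  have := Finset.card_le_card hsub
  rw [Fin.card_Iic] at this
  unfold conjIndex
  omega

theorem sum_conjIndex_add_one {j₀ : Fin m} (hj₀ : ∀ j, nn j ≤ nn j₀) :
    ∑ k : Fin (nn j₀ + 1), (conjIndex nn k + 1) = ∑ j, (nn j + 1) := by
  have hcard (k : Fin (nn j₀ + 1)) :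
      conjIndex nn k + 1 = ∑ j, if (k : ℕ) ≤ nn j then 1 else 0 := by
    have : 0 < (Finset.univ.filter fun j => (k : ℕ) ≤ nn j).card :=
      Finset.card_pos.mpr ⟨j₀, Finset.mem_filter.mpr ⟨Finset.mem_univ _, Nat.le_of_lt_succ k.2⟩⟩
    rw [conjIndex, Nat.sub_add_cancel this, Finset.card_filter]
  simp_rw [hcard]
  rw [Finset.sum_comm]
  refine Finset.sum_congr rfl fun j _ => ?_
  have hrange : (Finset.range (nn j₀ + 1)).filter (· ≤ nn j) = Finset.range (nn j + 1) := by
    ext i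
    simp only [Finset.mem_filter, Finset.mem_range]
    have := hj₀ j
    omega
  rw [Fin.sum_univ_eq_sum_range (fun k => if k ≤ nn j then 1 else 0), ← Finset.card_filter,
    hrange, Finset.card_range]

end ConjugateIndex

section Transpose

variable {R : Type*} [CommRing R] {m L : ℕ} {P : Fin m → Polynomial R}

/-- Viewing `P` as the bivariate polynomial `∑ j, z ^ j * P j (w)`, `coeffTranspose L P k` is its
coefficient of `w ^ k`, a polynomial in `z`. -/
noncomputable def coeffTranspose (L : ℕ) (P : Fin m → Polynomial R) (k : Fin (L + 1)) :
    Polynomial R :=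
  ∑ j : Fin m, Polynomial.C ((P j).coeff k) * Polynomial.X ^ (j : ℕ)

theorem coeff_coeffTranspose (P : Fin m → Polynomial R) (k : Fin (L + 1)) (j : Fin m) :
    (coeffTranspose L P k).coeff j = (P j).coeff k := by
  simp [coeffTranspose, Polynomial.finsetSum_coeff, Fin.val_inj]

theorem coeffTranspose_ne_zero (hP : ∀ j, (P j).natDegree ≤ L) (hP0 : P ≠ 0) :
    coeffTranspose L P ≠ 0 := by
  obtain ⟨j, hj⟩ := Function.ne_iff.mp hP0
  intro h
  apply Polynomial.leadingCoeff_ne_zero.mpr hj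
  have := coeff_coeffTranspose P ⟨(P j).natDegree, Nat.lt_succ_of_le (hP j)⟩ j
  rwa [h, Pi.zero_apply, Polynomial.coeff_zero, eq_comm] at this

theorem natDegree_coeffTranspose_le {nn : Fin m → ℕ} (hnn : Antitone nn)
    (hP : ∀ j, (P j).natDegree ≤ nn j) (k : Fin (L + 1)) :
    (coeffTranspose L P k).natDegree ≤ conjIndex nn k := by
  refine Polynomial.natDegree_sum_le_of_forall_le _ _ fun j _ => ?_
  by_cases hc : (P j).coeff k = 0
  · simp [hc]
  · exact (Polynomial.natDegree_C_mul_X_pow_le _ _).trans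
      (le_conjIndex hnn ((Polynomial.le_natDegree_of_ne_zero hc).trans (hP j)))

theorem sum_coeffTranspose_mul_pow (hP : ∀ j, (P j).natDegree ≤ L) (h : R⟦X⟧) :
    ∑ k, (coeffTranspose L P k : R⟦X⟧) * h ^ (k : ℕ) =
      ∑ j, Polynomial.aeval h (P j) * X ^ (j : ℕ) := by
  simp_rw [fun j => Polynomial.aeval_eq_sum_range' (Nat.lt_succ_of_le (hP j)) h,
    ← Fin.sum_univ_eq_sum_range (fun k => (P _).coeff k • h ^ k), Finset.sum_mul]
  rw [Finset.sum_comm]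
  refine Finset.sum_congr rfl fun k _ => ?_
  rw [coeffTranspose, ← Polynomial.coeToPowerSeries.ringHom_apply, map_sum, Finset.sum_mul]
  refine Finset.sum_congr rfl fun j _ => ?_
  simp [Polynomial.coeToPowerSeries.ringHom_apply, smul_eq_C_mul]
  ring

end Transpose

theorem IsNormal.of_map {K : Type*} [Field K] {m m' : ℕ} {f : Fin m → K⟦X⟧}
    {F : Fin m' → K⟦X⟧} {nn : Fin m → ℕ} {mm : Fin m' → ℕ} (hF : IsNormal F mm)
    (T : (Fin m → Polynomial K) → Fin m' → Polynomial K)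
    (hweight : ∑ k, (mm k + 1) = ∑ j, (nn j + 1))
    (hT0 : ∀ A, (∀ j, (A j).natDegree ≤ nn j) → A ≠ 0 → T A ≠ 0)
    (hTdeg : ∀ A, (∀ j, (A j).natDegree ≤ nn j) → ∀ k, (T A k).natDegree ≤ mm k)
    (hTord : ∀ A, (∀ j, (A j).natDegree ≤ nn j) →
      (∑ k, (T A k : K⟦X⟧) * F k).order = (∑ j, (A j : K⟦X⟧) * f j).order) :
    IsNormal f nn := by
  rintro A ⟨hA0, hAdeg, hAord⟩
  simp_rw [← Polynomial.natDegree_le_iff_degree_le] at hAdeg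
  have hB : IsPadeApprox F mm (T A) := ⟨hT0 A hAdeg hA0,
    fun k => Polynomial.natDegree_le_iff_degree_le.mp (hTdeg A hAdeg k),
    by rwa [hTord A hAdeg, hweight]⟩
  rw [← hTord A hAdeg, ← hweight]
  exact hF _ hB

theorem normal_of_inverse_perfect_general (K : Type*) [Field K]
    (f g : PowerSeries K)
    (hfg : PScomp f g = PowerSeries.X) (hgf : PScomp g f = PowerSeries.X)
    (hperf : ∀ l : ℕ, IsPerfect (fun i : Fin (l + 1) => (g + 1) ^ (i : ℕ))) :
    ∀ m : ℕ, 2 ≤ m → ∀ nn : Fin m → ℕ, (∀ i j : Fin m, i ≤ j → nn j ≤ nn i) →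
      IsNormal (fun i : Fin m => f ^ (i : ℕ)) nn := by
  intro m hm nn hnn
  have hf0 := constantCoeff_eq_zero_of_PScomp_eq_X hfg
  have hg0 := constantCoeff_eq_zero_of_PScomp_eq_X hgf
  rw [PScomp_eq_subst hg0] at hfg
  rw [PScomp_eq_subst hf0] at hgf
  let j₀ : Fin m := ⟨0, by omega⟩
  have hj₀ (j : Fin m) : nn j ≤ nn j₀ := hnn j₀ j (Fin.le_iff_val_le_val.mpr (Nat.zero_le _))
  have hdeg {A : Fin m → Polynomial K} (hA : ∀ j, (A j).natDegree ≤ nn j) (j : Fin m) :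
      (Polynomial.taylor (-1) (A j)).natDegree ≤ nn j :=
    (Polynomial.natDegree_taylor _ _).trans_le (hA j)
  refine (hperf (nn j₀) fun k => conjIndex nn k).of_map
    (fun A => coeffTranspose (nn j₀) fun j => Polynomial.taylor (-1) (A j))
    (sum_conjIndex_add_one hj₀)
    (fun A hA hA0 => coeffTranspose_ne_zero (fun j => (hdeg hA j).trans (hj₀ j))
      fun h => hA0 (funext fun j => (Polynomial.taylor_eq_zero _ _).mp (congrFun h j)))
    (fun A hA => natDegree_coeffTranspose_le hnn (hdeg hA)) (fun A hA => ?_)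
  rw [sum_coeffTranspose_mul_pow fun j => (hdeg hA j).trans (hj₀ j),
    ← order_subst_of_subst_eq_X hf0 hg0 hgf (∑ j, (A j : K⟦X⟧) * f ^ (j : ℕ)),
    subst_sum_coe_mul_pow hg0, hfg]
  simp [Polynomial.taylor_apply, Polynomial.aeval_comp]

/-- if `f` and `g` are compositional inverses and `(1, g̃, …, g̃^l)` is perfect
for every `l`, where `g̃ = g + 1`, then every nonincreasing index is normal with respect to
`(1, f, …, f^{m−1})` for every `m ≥ 2`. -/
theorem normal_of_inverse_perfect (K : Type*) [Field K] [CharZero K]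
    (f g : PowerSeries K)
    (hfg : PScomp f g = PowerSeries.X) (hgf : PScomp g f = PowerSeries.X)
    (hperf : ∀ l : ℕ, IsPerfect (fun i : Fin (l + 1) => (g + 1) ^ (i : ℕ))) :
    ∀ m : ℕ, 2 ≤ m → ∀ nn : Fin m → ℕ, (∀ i j : Fin m, i ≤ j → nn j ≤ nn i) →
      IsNormal (fun i : Fin m => f ^ (i : ℕ)) nn :=
  normal_of_inverse_perfect_general K f g hfg hgf hperf
end

section
/- Let m ∈ ℤ_{≥2}. Then every nonincreasing index n = (n₀, n₁, …, n_{m−1}) ∈ ℤ_{≥0}^m with n₀ ≥ n₁ ≥ … ≥ n_{m−1} is normal with respect to the tuple of formal power series (1, log(1+z), log²(1+z), …, log^{m−1}(1+z)). -/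
open PowerSeries

/-- The formal power series `log(1+z) = Σ_{k≥1} (−1)^{k+1} z^k / k` over `ℚ`. -/
noncomputable def logPS : PowerSeries ℚ :=
  PowerSeries.mk fun k => if k = 0 then 0 else (-1 : ℚ) ^ (k + 1) / (k : ℚ)

/-!
Write `L = log(1+z)` and expand each `A_j` in powers of `1+z`: then `Σ_j A_j L^j` becomes
`Σ_k q_k(L) (1+z)^k`, and because the index is nonincreasing, `deg q_k < d_k := #{j | k ≤ n_j}`,
where `Σ_k d_k = Σ_j (n_j + 1)`. It remains to show that such a sum has order `< Σ_k d_k`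
unless every `q_k` vanishes. The operator `(1+z) d/dz - c` (which is `d/dL - c`) lowers the
order by at most one and maps `q(L)(1+z)^k` to `(q' + (k - c) q)(L)(1+z)^k`. Taking `c = k₀`
with `q_{k₀} ≠ 0` lowers `deg q_{k₀}` and keeps every other `q_k` nonzero, so by induction on
`Σ_k d_k` all `q_k` with `k ≠ k₀` vanish and `q_{k₀}` is a nonzero constant; but then the sum
has a nonzero constant term.
-/

open scoped Polynomial Finset

namespace Polynomial

variable {R : Type*}

theorem degree_derivative_add_smul_lt [Semiring R] {p : R[X]} {n : ℕ} (a : R)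
    (h : p.degree < n) : (derivative p + a • p).degree < n :=
  (degree_add_le _ _).trans_lt
    (max_lt (degree_derivative_le.trans_lt h) ((degree_smul_le _ _).trans_lt h))

theorem degree_derivative_lt_sub_one [Semiring R] {p : R[X]} {n : ℕ} (h : p.degree < n) :
    (derivative p).degree < ↑(n - 1) := by
  rcases eq_or_ne p 0 with rfl | hp
  · simp
  · have := (natDegree_lt_iff_degree_lt hp).mpr h
    exact (degree_derivative_lt hp).trans_le (degree_le_of_natDegree_le (by omega))

theorem eq_zero_of_derivative_add_smul_eq_zero [CommRing R] [NoZeroDivisors R] {c : R}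
    (hc : c ≠ 0) {p : R[X]} (h : derivative p + c • p = 0) : p = 0 := by
  by_contra hp
  have hderiv : derivative p = C (-c) * p := by
    rw [C_neg, neg_mul, ← smul_eq_C_mul, eq_neg_iff_add_eq_zero, h]
  have := degree_derivative_lt hp
  rw [hderiv, degree_C_mul (neg_ne_zero.mpr hc)] at this
  exact lt_irrefl _ this

theorem degree_ofFn_lt_of_forall_ne_zero [Semiring R] [DecidableEq R] {m d : ℕ}
    {v : Fin m → R} (h : ∀ j, v j ≠ 0 → (j : ℕ) < d) : (ofFn m v).degree < d := by
  rw [degree_lt_iff_coeff_zero]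
  intro i hi
  by_cases him : i < m
  · rw [ofFn_coeff_eq_val_of_lt _ him]
    by_contra hv
    exact absurd (h _ hv) (not_lt.mpr hi)
  · exact ofFn_coeff_eq_zero_of_ge _ (not_lt.mp him)

end Polynomial

namespace PowerSeries

variable {R : Type*} [CommRing R]

noncomputable def eulerOp (c : R) : R⟦X⟧ →ₗ[R] R⟦X⟧ :=
  LinearMap.mulLeft R (1 + X) ∘ₗ (d⁄dX R).toLinearMap - c • LinearMap.id

theorem eulerOp_apply (c : R) (f : R⟦X⟧) : eulerOp c f = (1 + X) * d⁄dX R f - c • f := rfl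

theorem coeff_succ_one_add_X_mul (f : R⟦X⟧) (n : ℕ) :
    coeff (n + 1) ((1 + X) * f) = coeff (n + 1) f + coeff n f := by
  rw [add_mul, one_mul, map_add, coeff_succ_X_mul]

theorem coeff_eulerOp (c : R) (f : R⟦X⟧) (n : ℕ) :
    coeff n (eulerOp c f) = (n + 1) * coeff (n + 1) f + (n - c) * coeff n f := by
  cases n with
  | zero =>
    simp only [eulerOp_apply, map_sub, add_mul, one_mul, map_add, coeff_zero_X_mul,
      coeff_derivative, coeff_smul]
    push_cast
    ring
  | succ n =>
    simp only [eulerOp_apply, map_sub, coeff_succ_one_add_X_mul, coeff_derivative, coeff_smul]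
    push_cast
    ring

theorem le_order_eulerOp {c : R} {f : R⟦X⟧} {n : ℕ}
    (h : ((n + 1 : ℕ) : ℕ∞) ≤ f.order) :
    (n : ℕ∞) ≤ (eulerOp c f).order := by
  refine nat_le_order _ _ fun i hi => ?_
  have hf : ∀ j ≤ n, coeff j f = 0 := fun j hj =>
    coeff_of_lt_order _ (lt_of_lt_of_le (by exact_mod_cast Nat.lt_succ_of_le hj) h)
  rw [coeff_eulerOp, hf i hi.le, hf (i + 1) hi, mul_zero, mul_zero, add_zero]

theorem one_add_X_mul_derivative_pow (k : ℕ) :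
    (1 + X) * d⁄dX R ((1 + X) ^ k) = k • (1 + X : R⟦X⟧) ^ k := by
  cases k with
  | zero => simp
  | succ k =>
    rw [derivative_pow, map_add, derivative_X, derivative_one, Nat.add_sub_cancel, nsmul_eq_mul]
    push_cast
    ring

theorem coe_eq_sum_taylor (p : R[X]) {M : ℕ} (hM : p.natDegree < M) :
    (p : R⟦X⟧) =
      ∑ k ∈ Finset.range M,
        C ((Polynomial.taylor (-1) p).coeff k) * (1 + X : R⟦X⟧) ^ k := by
  conv_lhs => rw [← Polynomial.sum_taylor_eq p (-1)]
  rw [Polynomial.sum_over_range' _ (fun _ => by simp) M (by rwa [Polynomial.natDegree_taylor]),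
    ← Polynomial.coeToPowerSeries.ringHom_apply, map_sum]
  simp [add_comm]

theorem sum_coe_mul_eq_sum_taylor {ι : Type*} [Fintype ι] (A : ι → R[X]) (f : ι → R⟦X⟧)
    {M : ℕ} (hM : ∀ j, (A j).natDegree < M) :
    ∑ j, (A j : R⟦X⟧) * f j =
      ∑ k ∈ Finset.range M,
        (∑ j, C ((Polynomial.taylor (-1) (A j)).coeff k) * f j) * (1 + X : R⟦X⟧) ^ k := by
  simp_rw [fun j => coe_eq_sum_taylor (A j) (hM j), Finset.sum_mul, mul_right_comm _ (f _)]
  exact Finset.sum_comm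

theorem aeval_ofFn [DecidableEq R] (m : ℕ) (v : Fin m → R) (g : R⟦X⟧) :
    Polynomial.aeval g (Polynomial.ofFn m v) = ∑ j, C (v j) * g ^ (j : ℕ) := by
  simp [Polynomial.ofFn_eq_sum_monomial, Polynomial.aeval_monomial]

end PowerSeries

theorem Antitone.lt_card_filter_le {m : ℕ} {n : Fin m → ℕ} (hn : Antitone n) {j : Fin m}
    {k : ℕ} (hk : k ≤ n j) : (j : ℕ) < #{i | k ≤ n i} := by
  have hsub : Finset.Iic j ⊆ ({i | k ≤ n i} : Finset (Fin m)) := fun i hi =>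
    Finset.mem_filter.mpr ⟨Finset.mem_univ i, hk.trans (hn (Finset.mem_Iic.mp hi))⟩
  simpa [Fin.card_Iic] using Finset.card_le_card hsub

theorem Finset.sum_range_card_filter_le {ι : Type*} (s : Finset ι) (n : ι → ℕ) {M : ℕ}
    (hM : ∀ i ∈ s, n i < M) :
    ∑ k ∈ range M, #{i ∈ s | k ≤ n i} = ∑ i ∈ s, (n i + 1) := by
  simp_rw [card_filter]
  rw [sum_comm]
  refine sum_congr rfl fun i hi => ?_
  rw [← card_filter, show {k ∈ range M | k ≤ n i} = range (n i + 1) by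
    ext k; simp only [mem_filter, mem_range]; have := hM i hi; omega, card_range]

theorem one_add_X_mul_derivative_logPS : (1 + X) * d⁄dX ℚ logPS = 1 := by
  have h : d⁄dX ℚ logPS = rescale (-1) (mk 1) := by
    rw [show logPS = log ℚ from rfl, deriv_log, rescale_mk]
    simp
  have key : rescale (-1 : ℚ) (mk 1 * (1 - X)) = 1 := by
    rw [mk_one_mul_one_sub_eq_one, map_one]
  rw [map_mul, map_sub, map_one, rescale_X, map_neg, map_one] at key
  rw [h]
  linear_combination key

theorem eulerOp_aeval_logPS_mul_pow (c : ℚ) (q : ℚ[X]) (k : ℕ) :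
    eulerOp c (Polynomial.aeval logPS q * (1 + X) ^ k) =
      Polynomial.aeval logPS (Polynomial.derivative q + ((k : ℚ) - c) • q) * (1 + X) ^ k := by
  have hq : (1 + X) * d⁄dX ℚ (Polynomial.aeval logPS q) =
      Polynomial.aeval logPS (Polynomial.derivative q) := by
    rw [Derivation.map_aeval, smul_eq_mul, mul_left_comm, one_add_X_mul_derivative_logPS, mul_one]
  rw [eulerOp_apply, Derivation.leibniz, smul_eq_mul, smul_eq_mul, mul_add, mul_left_comm,
    one_add_X_mul_derivative_pow, mul_left_comm, hq, map_add, map_smul, nsmul_eq_mul,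
    Algebra.smul_def, Algebra.smul_def, map_sub, map_natCast]
  ring

theorem eulerOp_sum_aeval_logPS_mul_pow (c : ℚ) (S : Finset ℕ) (q : ℕ → ℚ[X]) :
    eulerOp c (∑ k ∈ S, Polynomial.aeval logPS (q k) * (1 + X) ^ k) =
      ∑ k ∈ S, Polynomial.aeval logPS
        (Polynomial.derivative (q k) + ((k : ℚ) - c) • q k) * (1 + X) ^ k := by
  simp only [map_sum, eulerOp_aeval_logPS_mul_pow]

theorem eq_zero_of_sum_le_order_sum_aeval_logPS_mul_pow {S : Finset ℕ} {q : ℕ → ℚ[X]}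
    {d : ℕ → ℕ} (hdeg : ∀ k ∈ S, (q k).degree < d k)
    (hord : ((∑ k ∈ S, d k : ℕ) : ℕ∞) ≤
      (∑ k ∈ S, Polynomial.aeval logPS (q k) * (1 + X) ^ k).order) :
    ∀ k ∈ S, q k = 0 := by
  induction hW : ∑ k ∈ S, d k generalizing q d with
  | zero =>
    intro k hk
    have hneg := hdeg k hk
    rw [Finset.sum_eq_zero_iff.mp hW k hk, Nat.cast_zero] at hneg
    rwa [Nat.WithBot.lt_zero_iff, Polynomial.degree_eq_bot] at hneg
  | succ W ih =>
    rw [hW] at hord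
    by_contra! ⟨k₀, hk₀, hq₀⟩
    set q' : ℕ → ℚ[X] := fun k => Polynomial.derivative (q k) + ((k : ℚ) - k₀) • q k
    set d' := Function.update d k₀ (d k₀ - 1)
    have hdeg' : ∀ k ∈ S, (q' k).degree < d' k := by
      intro k hk
      rcases eq_or_ne k k₀ with rfl | hne
      · simpa [q', d'] using Polynomial.degree_derivative_lt_sub_one (hdeg k hk)
      · rw [show d' k = d k from Function.update_of_ne hne _ _]
        exact Polynomial.degree_derivative_add_smul_lt _ (hdeg k hk)
    have hsum' : ∑ k ∈ S, d' k = W := by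
      have := (Polynomial.natDegree_lt_iff_degree_lt hq₀).mpr (hdeg k₀ hk₀)
      rw [Finset.sum_update_of_mem hk₀, Finset.sdiff_singleton_eq_erase]
      rw [← Finset.add_sum_erase _ _ hk₀] at hW
      omega
    have hq'0 := ih hdeg'
      (hsum' ▸ eulerOp_sum_aeval_logPS_mul_pow (k₀ : ℚ) S q ▸ le_order_eulerOp hord) hsum'
    have hzero : ∀ k ∈ S, k ≠ k₀ → q k = 0 := fun k hk hne =>
      Polynomial.eq_zero_of_derivative_add_smul_eq_zero
        (sub_ne_zero.mpr (Nat.cast_injective.ne hne)) (hq'0 k hk)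
    have hconst : q k₀ = Polynomial.C ((q k₀).coeff 0) :=
      Polynomial.eq_C_of_derivative_eq_zero (by simpa [q'] using hq'0 k₀ hk₀)
    have hcoeff : coeff 0 (∑ k ∈ S, Polynomial.aeval logPS (q k) * (1 + X) ^ k) =
        (q k₀).coeff 0 := by
      rw [Finset.sum_eq_single_of_mem k₀ hk₀ fun k hk hne => by
        rw [hzero k hk hne, map_zero, zero_mul], hconst]
      simp
    refine hq₀ (hconst.trans ?_)
    rw [← hcoeff, coeff_of_lt_order 0 (lt_of_lt_of_le (by exact_mod_cast W.succ_pos) hord),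
      map_zero]

theorem eq_zero_of_le_order_sum_mul_logPS_pow {m : ℕ} {n : Fin m → ℕ} (hn : Antitone n)
    {A : Fin m → ℚ[X]} (hdeg : ∀ j, (A j).degree ≤ n j)
    (hord : ((∑ j, (n j + 1) : ℕ) : ℕ∞) ≤
      (∑ j, (A j : ℚ⟦X⟧) * logPS ^ (j : ℕ)).order) :
    A = 0 := by
  set M := ∑ j, (n j + 1)
  have hnM : ∀ j, n j < M := fun j =>
    Finset.single_le_sum (fun i _ => Nat.zero_le (n i + 1)) (Finset.mem_univ j)
  have hdegA : ∀ j, (A j).natDegree ≤ n j := fun j =>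
    Polynomial.natDegree_le_of_degree_le (hdeg j)
  let c (k : ℕ) (j : Fin m) : ℚ := (Polynomial.taylor (-1) (A j)).coeff k
  have hc : ∀ k j, c k j ≠ 0 → k ≤ n j := fun k j h =>
    (Polynomial.le_natDegree_of_ne_zero h).trans
      ((Polynomial.natDegree_taylor _ _).trans_le (hdegA j))
  have hexpand : ∑ j, (A j : ℚ⟦X⟧) * logPS ^ (j : ℕ) =
      ∑ k ∈ Finset.range M, Polynomial.aeval logPS (Polynomial.ofFn m (c k)) * (1 + X) ^ k := by
    simp only [sum_coe_mul_eq_sum_taylor A _ fun j => (hdegA j).trans_lt (hnM j), aeval_ofFn, c]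
  have hq : ∀ k ∈ Finset.range M, Polynomial.ofFn m (c k) = 0 := by
    refine eq_zero_of_sum_le_order_sum_aeval_logPS_mul_pow (d := fun k => #{j | k ≤ n j})
      (fun k _ => Polynomial.degree_ofFn_lt_of_forall_ne_zero fun j h =>
        hn.lt_card_filter_le (hc k j h)) ?_
    rwa [Finset.sum_range_card_filter_le _ _ fun j _ => hnM j, ← hexpand]
  funext j
  rw [Pi.zero_apply, ← Polynomial.taylor_eq_zero (r := -1)]
  ext k
  rw [Polynomial.coeff_zero]
  rcases lt_or_ge k M with hk | hk
  · simpa using congrFun ((Polynomial.injective_ofFn m).eq_iff.mp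
      ((hq k (Finset.mem_range.mpr hk)).trans (map_zero _).symm)) j
  · exact by_contra fun h => absurd (hc k j h) (by have := hnM j; omega)

theorem log_powers_normal_general (m : ℕ) (nn : Fin m → ℕ)
    (hmono : ∀ i j : Fin m, i ≤ j → nn j ≤ nn i) :
    IsNormal (fun j : Fin m => logPS ^ (j : ℕ)) nn := by
  rintro A ⟨hA, hdeg, hord⟩
  refine le_antisymm ?_ hord
  by_contra! hlt
  have hN : ((∑ j, (nn j + 1) : ℕ) : ℕ∞) ≤
      (∑ j, (A j : ℚ⟦X⟧) * logPS ^ (j : ℕ)).order :=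
    (Nat.cast_le.mpr le_tsub_add).trans (Order.add_one_le_of_lt hlt)
  exact hA (eq_zero_of_le_order_sum_mul_logPS_pow (fun i j h => hmono i j h) hdeg hN)

/-- every nonincreasing index is normal with respect to
`(1, log(1+z), …, log^{m−1}(1+z))`. -/
theorem log_powers_normal (m : ℕ) (hm : 2 ≤ m) (nn : Fin m → ℕ)
    (hmono : ∀ i j : Fin m, i ≤ j → nn j ≤ nn i) :
    IsNormal (fun j : Fin m => logPS ^ (j : ℕ)) nn :=
  log_powers_normal_general m nn hmono
end

section
/- Let m ≥ 2 and n ≥ 0 be integers and 1 ≤ i ≤ m. Let a_{h,j}^{(i)} (0 ≤ h ≤ n+1, 1 ≤ j ≤ m) be the partial fraction coefficients of 1/Q_{m,i,n+1}(x), and d_{n+1} = lcm(1, 2, …, n+1). Then for all 0 ≤ h ≤ n+1 and 1 ≤ j ≤ m, the rational number d_{n+1}^m · ((n+1)!)^m · a_{h,j}^{(i)} is an integer. Consequently, for any number field K and any α ∈ K, the element d_{n+1}^m · ((n+1)!)^m · (m−1)! · den(α)^{n+1} · A_{i,j,n+1}(α) lies in the ring of integers O_K, for all 1 ≤ i ≤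 m and 0 ≤ j ≤ m−1. -/
/-! Multiplying the partial fraction decomposition by `∏_{k ≤ n+1} (x - k)^m` gives a polynomial
identity. Substitute `x = h + D t` with `D = d_{n+1}` and read it modulo `t^m`: every summand except
the one for the pole `h` vanishes, and for `k ≠ h` the factor `x - k` becomes
`(h - k)(1 + (D / (h - k)) t)`, which is `h - k` times a unit of `ℤ⟦t⟧` because `|h - k| ≤ n + 1`
divides `D`. Comparing coefficients, `(∏_{k ≠ h} (h - k))^m D^(m-j) a_{h,j}` is an integer, and
`∏_{k ≠ h} (h - k) = ± h! (n+1-h)!` divides `(n+1)!`.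
For the second claim, `den(α)^(n+1) (1 + α)^h = den(α)^(n+1-h) (den(α) + den(α) α)^h` is integral
for `h ≤ n + 1`. -/

/-- `a i h j` (for `1 ≤ i ≤ m`, `0 ≤ h ≤ n+1`, `1 ≤ j ≤ m`) are the partial fraction
coefficients of `1/Q_{m,i,n+1}(x)` where `Q_{m,i,n+1}(x) = (∏_{h=0}^n (x−h)^m)·(x−(n+1))^i`. -/
def IsPFD (m n : ℕ) (a : ℕ → ℕ → ℕ → ℚ) : Prop :=
  ∀ i : ℕ, 1 ≤ i → i ≤ m → ∀ x : ℚ, (∀ h : ℕ, h ≤ n + 1 → x ≠ (h : ℚ)) →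
    ((∏ h ∈ Finset.range (n + 1), (x - (h : ℚ)) ^ m) * (x - ((n + 1 : ℕ) : ℚ)) ^ i)⁻¹ =
      ∑ h ∈ Finset.range (n + 2), ∑ j ∈ Finset.range m,
        a i h (j + 1) / (x - (h : ℚ)) ^ (j + 1)

/-- The polynomial `A_{i,j,n+1}(z) = (Σ_{h=0}^{n+1} a_{h,j+1}^{(i)} (1+z)^h)/j!`. -/
noncomputable def padeA (n : ℕ) (a : ℕ → ℕ → ℕ → ℚ) (i j : ℕ) : Polynomial ℚ :=
  Polynomial.C ((j.factorial : ℚ))⁻¹ *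
    ∑ h ∈ Finset.range (n + 2), Polynomial.C (a i h (j + 1)) * (1 + Polynomial.X) ^ h

/-- `dlcm n = lcm(1, 2, …, n)`. -/
noncomputable def dlcm (n : ℕ) : ℕ := Finset.lcm (Finset.Icc 1 n) id

/-- `den α` is the least positive integer `k` such that `k·α` is an algebraic integer. -/
noncomputable def den {K : Type*} [Field K] (α : K) : ℕ :=
  sInf {k : ℕ | 0 < k ∧ IsIntegral ℤ ((k : K) * α)}

open Polynomial Finset
open scoped PowerSeries Nat

theorem prod_erase_range_natCast_sub {R : Type*} [CommRing R] (h d : ℕ) :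
    ∏ k ∈ (range (h + d + 1)).erase h, ((h : R) - k) = (-1) ^ d * h ! * d ! := by
  induction d with
  | zero =>
    rw [add_zero, range_add_one, erase_insert notMem_range_self, prod_range_natCast_sub,
      ← Nat.descFactorial_eq_prod_range, Nat.descFactorial_self]
    simp
  | succ d ih =>
    rw [← add_assoc, range_add_one, erase_insert_of_ne (by omega),
      prod_insert (by simp), ih, Nat.factorial_succ]
    push_cast
    ring

theorem dvd_dlcm {k N : ℕ} (hk : 1 ≤ k) (hkN : k ≤ N) : k ∣ dlcm N :=
  Finset.dvd_lcm (mem_Icc.2 ⟨hk, hkN⟩)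

theorem PowerSeries.exists_eq_coeff_of_X_pow_dvd {R S : Type*} [CommRing R] [CommRing S]
    (f : R →+* S) {F U : R⟦X⟧} (hU : IsUnit U) {T : S⟦X⟧} {m t : ℕ}
    (hdvd : X ^ m ∣ map f F - map f U * T) (ht : t < m) : ∃ r, f r = coeff t T := by
  obtain ⟨V, hUV⟩ := hU.exists_right_inv
  have hdvd' : X ^ m ∣ map f (F * V) - T := by
    convert hdvd.mul_left (map f V) using 1
    rw [mul_sub, ← mul_assoc, ← map_mul, ← map_mul, mul_comm V U, hUV, map_one, one_mul,
      mul_comm V F]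
  refine ⟨coeff t (F * V), ?_⟩
  rw [← coeff_map, ← sub_eq_zero, ← map_sub]
  exact X_pow_dvd_iff.1 hdvd' t ht

namespace IsPFD

variable {m n : ℕ} {a : ℕ → ℕ → ℕ → ℚ}

theorem polynomial_identity (ha : IsPFD m n a) {i : ℕ} (hi : 1 ≤ i) (him : i ≤ m) :
    (X - C ((n + 1 : ℕ) : ℚ)) ^ (m - i) =
      ∑ h ∈ range (n + 2), ∑ j ∈ range m, C (a i h (j + 1)) *
        ((∏ k ∈ (range (n + 2)).erase h, (X - C (k : ℚ)) ^ m) *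
          (X - C (h : ℚ)) ^ (m - (j + 1))) := by
  refine eq_of_infinite_eval_eq _ _ <|
    ((range (n + 2)).image (Nat.cast : ℕ → ℚ)).finite_toSet.infinite_compl.mono fun x hx => ?_
  have hx : ∀ k < n + 2, x - k ≠ 0 := fun k hk h0 =>
    hx (by rw [sub_eq_zero.1 h0]; exact mem_image_of_mem _ (mem_range.2 hk))
  simp only [Set.mem_ofPred_eq, eval_pow, eval_sub, eval_X, eval_C, eval_finsetSum, eval_mul,
    eval_prod]
  have hP : ∏ k ∈ range (n + 2), (x - k) ^ m =
      (x - (n + 1 : ℕ)) ^ (m - i) *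
        ((∏ k ∈ range (n + 1), (x - k) ^ m) * (x - (n + 1 : ℕ)) ^ i) := by
    rw [prod_range_succ, mul_left_comm, ← pow_add, Nat.sub_add_cancel him]
  have hQ : (∏ k ∈ range (n + 1), (x - k) ^ m) * (x - (n + 1 : ℕ)) ^ i ≠ 0 :=
    mul_ne_zero (prod_ne_zero_iff.2 fun k hk => pow_ne_zero _ (hx k (by have := mem_range.1 hk; omega)))
      (pow_ne_zero _ (hx _ (by omega)))
  calc (x - (n + 1 : ℕ)) ^ (m - i)
      = (∏ k ∈ range (n + 2), (x - k) ^ m) *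
          ((∏ k ∈ range (n + 1), (x - k) ^ m) * (x - (n + 1 : ℕ)) ^ i)⁻¹ := by
        rw [hP, mul_assoc, mul_inv_cancel₀ hQ, mul_one]
    _ = _ := by
        rw [ha i hi him x fun h hh => sub_ne_zero.1 (hx h (by omega)), mul_sum]
        refine sum_congr rfl fun h hh => ?_
        rw [mul_sum]
        refine sum_congr rfl fun j hj => ?_
        rw [← mul_prod_erase _ _ hh, ← pow_mul_pow_sub _ (mem_range.1 hj : j < m)]
        field_simp [hx h (mem_range.1 hh)]

/-- The substitution `x = h + D t` applied to `polynomial_identity`: all summands but the `h`-th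
contain `(x - h)^m = (D t)^m`. -/
theorem X_pow_dvd_sub_principalPart (ha : IsPFD m n a) {i : ℕ} (hi : 1 ≤ i) (him : i ≤ m)
    {h : ℕ} (hh : h < n + 2) (D : ℚ) :
    (PowerSeries.X : ℚ⟦X⟧) ^ m ∣
      (PowerSeries.C ((h : ℚ) - (n + 1 : ℕ)) + PowerSeries.C D * PowerSeries.X) ^ (m - i) -
        (∏ k ∈ (range (n + 2)).erase h,
            (PowerSeries.C ((h : ℚ) - k) + PowerSeries.C D * PowerSeries.X) ^ m) *
          ∑ j ∈ range m, PowerSeries.C (a i h (j + 1)) *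
            (PowerSeries.C D * PowerSeries.X) ^ (m - (j + 1)) := by
  set w : ℕ → ℚ⟦X⟧ := fun k => PowerSeries.C ((h : ℚ) - k) + PowerSeries.C D * PowerSeries.X
  have hw : ∀ k : ℕ, aeval (PowerSeries.C (h : ℚ) + PowerSeries.C D * PowerSeries.X)
      (X - C (k : ℚ)) = w k := fun k => by
    simp only [map_natCast, aeval_X, map_sub, w]
    ring
  have hwh : w h = PowerSeries.C D * PowerSeries.X := by simp [w]
  have key := congrArg (aeval (PowerSeries.C (h : ℚ) + PowerSeries.C D * PowerSeries.X))
    (ha.polynomial_identity hi him)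
  simp only [map_pow, map_sum, map_mul, map_prod, hw, aeval_C, PowerSeries.algebraMap_apply,
    Algebra.algebraMap_self, RingHom.id_apply] at key
  show _ ∣ w (n + 1) ^ (m - i) - (∏ k ∈ (range (n + 2)).erase h, w k ^ m) *
    ∑ j ∈ range m, PowerSeries.C (a i h (j + 1)) *
      (PowerSeries.C D * PowerSeries.X) ^ (m - (j + 1))
  rw [key, ← add_sum_erase _ _ (mem_range.2 hh), ← hwh, mul_sum]
  simp_rw [mul_left_comm (∏ k ∈ (range (n + 2)).erase h, w k ^ m), add_sub_cancel_left]
  refine dvd_sum fun h' hh' => dvd_sum fun j _ => Dvd.dvd.mul_left (Dvd.dvd.mul_right ?_ _) _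
  have hmem : h ∈ (range (n + 2)).erase h' :=
    mem_erase.2 ⟨(ne_of_mem_erase hh').symm, mem_range.2 hh⟩
  exact dvd_trans (by rw [hwh, mul_pow]; exact dvd_mul_left _ _)
    (dvd_prod_of_mem (fun k => w k ^ m) hmem)

theorem exists_int_eq_prod_pow_mul (ha : IsPFD m n a) {i : ℕ} (hi : 1 ≤ i) (him : i ≤ m)
    {h : ℕ} (hh : h < n + 2) {j : ℕ} (hj : 1 ≤ j) (hjm : j ≤ m) {D : ℤ}
    (hD : ∀ k ∈ (range (n + 2)).erase h, (h : ℤ) - k ∣ D) :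
    ∃ z : ℤ, ((∏ k ∈ (range (n + 2)).erase h, ((h : ℤ) - k) : ℤ) : ℚ) ^ m * (D : ℚ) ^ (m - j) *
      a i h j = z := by
  obtain ⟨j, rfl⟩ : ∃ j', j = j' + 1 := ⟨j - 1, by omega⟩
  set c := ∏ k ∈ (range (n + 2)).erase h, ((h : ℤ) - k)
  set U : ℤ⟦X⟧ := ∏ k ∈ (range (n + 2)).erase h,
    (1 + PowerSeries.C (D / ((h : ℤ) - k)) * PowerSeries.X) ^ m
  set T : ℚ⟦X⟧ := PowerSeries.C ((c : ℚ) ^ m) * ∑ j ∈ range m, PowerSeries.C (a i h (j + 1)) *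
    (PowerSeries.C (D : ℚ) * PowerSeries.X) ^ (m - (j + 1))
  have hfactor : ∀ k ∈ (range (n + 2)).erase h,
      PowerSeries.C (((h : ℤ) - k : ℤ) : ℚ) *
          (1 + PowerSeries.C ((D / ((h : ℤ) - k) : ℤ) : ℚ) * PowerSeries.X) =
        PowerSeries.C ((h : ℚ) - k) + PowerSeries.C (D : ℚ) * PowerSeries.X := fun k hk => by
    rw [mul_add, mul_one, ← mul_assoc, ← map_mul, ← Int.cast_mul, Int.mul_ediv_cancel' (hD k hk)]
    push_cast; rfl
  have hdvd : PowerSeries.X ^ m ∣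
      PowerSeries.map (Int.castRingHom ℚ)
          ((PowerSeries.C ((h : ℤ) - (n + 1 : ℕ)) + PowerSeries.C D * PowerSeries.X) ^ (m - i)) -
        PowerSeries.map (Int.castRingHom ℚ) U * T := by
    convert ha.X_pow_dvd_sub_principalPart hi him hh D using 2
    · simp
    · rw [← mul_assoc]
      congr 1
      simp only [c, U, Int.cast_prod, map_prod, ← prod_pow, ← prod_mul_distrib]
      refine prod_congr rfl fun k hk => ?_
      rw [← hfactor k hk]
      simp [mul_pow, mul_comm]
  have hU : IsUnit U := by simp [U, PowerSeries.isUnit_iff_constantCoeff]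
  obtain ⟨z, hz⟩ := PowerSeries.exists_eq_coeff_of_X_pow_dvd _ hU hdvd (t := m - (j + 1)) (by omega)
  refine ⟨z, ?_⟩
  have hterm : ∀ j', PowerSeries.C (a i h (j' + 1)) *
      (PowerSeries.C (D : ℚ) * PowerSeries.X) ^ (m - (j' + 1)) =
      PowerSeries.C (a i h (j' + 1) * (D : ℚ) ^ (m - (j' + 1))) * PowerSeries.X ^ (m - (j' + 1)) :=
    fun j' => by rw [mul_pow, ← mul_assoc, ← map_pow, ← map_mul]
  rw [eq_intCast] at hz
  rw [hz, PowerSeries.coeff_C_mul, map_sum, sum_eq_single j]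
  · rw [hterm, PowerSeries.coeff_C_mul_X_pow, if_pos rfl]
    ring
  · intro j' hj' hne
    rw [hterm, PowerSeries.coeff_C_mul_X_pow, if_neg (by have := mem_range.1 hj'; omega)]
  · exact fun hj => absurd (mem_range.2 (by omega)) hj

theorem exists_int_eq_dlcm_pow_mul_factorial_pow_mul (ha : IsPFD m n a) {i : ℕ} (hi : 1 ≤ i)
    (him : i ≤ m) {h : ℕ} (hh : h ≤ n + 1) {j : ℕ} (hj : 1 ≤ j) (hjm : j ≤ m) :
    ∃ z : ℤ, (dlcm (n + 1) : ℚ) ^ m * ((n + 1)! : ℚ) ^ m * a i h j = z := by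
  obtain ⟨d, hd⟩ : ∃ d, n + 1 = h + d := ⟨n + 1 - h, by omega⟩
  have hD : ∀ k ∈ (range (n + 2)).erase h, (h : ℤ) - k ∣ (dlcm (n + 1) : ℤ) := fun k hk => by
    have hk' := mem_erase.1 hk
    have := mem_range.1 hk'.2
    exact Int.natAbs_dvd.1 (Int.natCast_dvd_natCast.2 (dvd_dlcm (by omega) (by omega)))
  obtain ⟨z, hz⟩ := ha.exists_int_eq_prod_pow_mul hi him (by omega) hj hjm hD
  obtain ⟨e, he⟩ : ∏ k ∈ (range (n + 2)).erase h, ((h : ℤ) - k) ∣ ((n + 1)! : ℤ) := by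
    rw [show n + 2 = h + d + 1 by omega, prod_erase_range_natCast_sub, hd, mul_assoc,
      (isUnit_neg_one.pow d).mul_left_dvd]
    exact_mod_cast Nat.factorial_mul_factorial_dvd_factorial_add h d
  refine ⟨(dlcm (n + 1) : ℤ) ^ j * e ^ m * z, ?_⟩
  have hfac : ((n + 1)! : ℚ) = ((∏ k ∈ (range (n + 2)).erase h, ((h : ℤ) - k) : ℤ) : ℚ) * e := by
    exact_mod_cast he
  rw [Int.cast_mul, ← hz, ← pow_mul_pow_sub _ hjm, hfac]
  push_cast
  ring

end IsPFD

theorem isIntegral_den_mul {K : Type*} [Field K] {α : K} (hα : IsAlgebraic ℤ α) :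
    IsIntegral ℤ ((den α : K) * α) := by
  obtain ⟨y, hy, hint⟩ := hα.exists_integral_multiple
  rw [zsmul_eq_mul] at hint
  have hmem : y.natAbs ∈ {k : ℕ | 0 < k ∧ IsIntegral ℤ ((k : K) * α)} := by
    refine ⟨Int.natAbs_pos.2 hy, ?_⟩
    rcases Int.natAbs_eq y with hy' | hy'
    · rwa [hy', Int.cast_natCast] at hint
    · rw [hy', Int.cast_neg, Int.cast_natCast, neg_mul] at hint
      simpa using hint.neg
  exact (Nat.sInf_mem ⟨_, hmem⟩).2

theorem isIntegral_natCast_pow_mul_one_add_pow {A : Type*} [CommRing A] {α : A} {k : ℕ}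
    (hk : IsIntegral ℤ ((k : A) * α)) {N h : ℕ} (hh : h ≤ N) :
    IsIntegral ℤ ((k : A) ^ N * (1 + α) ^ h) := by
  rw [← Nat.sub_add_cancel hh, pow_add, mul_assoc, ← mul_pow, mul_one_add]
  exact ((isIntegral_natCast _).pow _).mul (((isIntegral_natCast k).add hk).pow h)

theorem aeval_padeA {K : Type*} [Field K] [Algebra ℚ K] (α : K) (n : ℕ) (a : ℕ → ℕ → ℕ → ℚ)
    (i j : ℕ) :
    aeval α (padeA n a i j) =
      ∑ h ∈ range (n + 2), algebraMap ℚ K ((j ! : ℚ)⁻¹ * a i h (j + 1)) * (1 + α) ^ h := by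
  simp only [padeA, map_mul, map_sum, map_pow, map_add, map_one, aeval_C, aeval_X, mul_sum,
    mul_assoc]

namespace IsPFD

variable {m n : ℕ} {a : ℕ → ℕ → ℕ → ℚ}

theorem isIntegral_mul_aeval_padeA (ha : IsPFD m n a) {K : Type*} [Field K] [CharZero K] {α : K}
    (hα : IsAlgebraic ℤ α) {i j : ℕ} (hi : 1 ≤ i) (him : i ≤ m) (hj : j ≤ m - 1) :
    IsIntegral ℤ ((((dlcm (n + 1)) ^ m * ((n + 1)!) ^ m * (m - 1)! * (den α) ^ (n + 1) : ℕ) : K) *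
      aeval α (padeA n a i j)) := by
  obtain ⟨b, hb⟩ := Nat.factorial_dvd_factorial hj
  rw [aeval_padeA, mul_sum]
  refine IsIntegral.sum _ fun h hh => ?_
  have hh : h ≤ n + 1 := by have := mem_range.1 hh; omega
  obtain ⟨z, hz⟩ := ha.exists_int_eq_dlcm_pow_mul_factorial_pow_mul hi him hh (j := j + 1)
    (by omega) (by omega)
  have hq : (((dlcm (n + 1)) ^ m * ((n + 1)!) ^ m * (m - 1)! : ℕ) : ℚ) *
      ((j ! : ℚ)⁻¹ * a i h (j + 1)) = (b * z : ℤ) := by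
    rw [hb]
    push_cast
    rw [← hz]
    field_simp
  have hsplit : ((((dlcm (n + 1)) ^ m * ((n + 1)!) ^ m * (m - 1)! * (den α) ^ (n + 1) : ℕ) : K) *
      (algebraMap ℚ K ((j ! : ℚ)⁻¹ * a i h (j + 1)) * (1 + α) ^ h)) =
      ((b * z : ℤ) : K) * ((den α : K) ^ (n + 1) * (1 + α) ^ h) := by
    rw [← map_intCast (algebraMap ℚ K), ← hq]
    simp only [map_mul, map_natCast]
    push_cast
    ring
  rw [hsplit]
  exact (isIntegral_intCast _).mul
    (isIntegral_natCast_pow_mul_one_add_pow (isIntegral_den_mul hα) hh)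

end IsPFD

theorem pade_denominator_general (m n : ℕ) (a : ℕ → ℕ → ℕ → ℚ)
    (ha : IsPFD m n a) :
    (∀ i h j : ℕ, 1 ≤ i → i ≤ m → h ≤ n + 1 → 1 ≤ j → j ≤ m →
      ∃ z : ℤ, ((dlcm (n + 1) : ℚ)) ^ m * (((n + 1).factorial : ℚ)) ^ m * a i h j = (z : ℚ)) ∧
    (∀ (K : Type) [Field K] [NumberField K] (α : K) (i j : ℕ), 1 ≤ i → i ≤ m → j ≤ m - 1 →
      IsIntegral ℤ
        ((((dlcm (n + 1)) ^ m * ((n + 1).factorial) ^ m * (m - 1).factorial *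
            (den α) ^ (n + 1) : ℕ) : K) * Polynomial.aeval α (padeA n a i j))) :=
  ⟨fun _ _ _ hi him hh hj hjm => ha.exists_int_eq_dlcm_pow_mul_factorial_pow_mul hi him hh hj hjm,
    fun K _ _ α _ _ hi him hj => ha.isIntegral_mul_aeval_padeA
      ((IsFractionRing.isAlgebraic_iff ℤ ℚ K).2 (.of_finite ℚ α)) hi him hj⟩

/-- `d_{n+1}^m ((n+1)!)^m a_{h,j}^{(i)} ∈ ℤ`, and consequently for a number
field `K` and `α ∈ K`, `d_{n+1}^m ((n+1)!)^m (m−1)! den(α)^{n+1} A_{i,j,n+1}(α) ∈ O_K`. -/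
theorem pade_denominator (m n : ℕ) (hm : 2 ≤ m) (a : ℕ → ℕ → ℕ → ℚ)
    (ha : IsPFD m n a) :
    (∀ i h j : ℕ, 1 ≤ i → i ≤ m → h ≤ n + 1 → 1 ≤ j → j ≤ m →
      ∃ z : ℤ, ((dlcm (n + 1) : ℚ)) ^ m * (((n + 1).factorial : ℚ)) ^ m * a i h j = (z : ℚ)) ∧
    (∀ (K : Type) [Field K] [NumberField K] (α : K) (i j : ℕ), 1 ≤ i → i ≤ m → j ≤ m - 1 →
      IsIntegral ℤ
        ((((dlcm (n + 1)) ^ m * ((n + 1).factorial) ^ m * (m - 1).factorial *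
            (den α) ^ (n + 1) : ℕ) : K) * Polynomial.aeval α (padeA n a i j))) :=
  pade_denominator_general m n a ha
end

section
/- Let m ≥ 2 and n ≥ 0 be integers and let α be a nonzero complex number. Then for all 1 ≤ i ≤ m and 0 ≤ j ≤ m−1, |A_{i,j,n+1}(α)| ≤ ( 2^m (1+|α|) / |α| ) · (n+1)^m · ( (1+|α|)·2^m )^{n+1} · (n!)^{−m}. -/
/-! Expanding around a pole `h₀` in the variable `X = x - h₀`, the coefficients `a_{h₀,j}` are
power-series coefficients of `X^(m - e_{h₀}) ∏_{l ≠ h₀} (X + h₀ - l)^(-e_l)`, where `e_l` is the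
order of the pole at `l`. Each factor `(X + c)⁻¹` with `|c| ≥ 1` is majorized coefficientwise by
`|c|⁻¹ (1 - X)⁻¹`, so `|a_{h₀,j}|` is at most `∏_{l ≤ n, l ≠ h₀} |h₀ - l|^(-m)` times a
coefficient of `(1 - X)^(-W)` with `W ≤ m (n+1)`. The product is `(h₀! (n-h₀)!)^(-m) ≤ (2^n/n!)^m`
and the binomial coefficient is at most `4^m (n+1)^m`. Evaluating `A_{i,j,n+1}` termwise at `α`
and summing `∑_{h ≤ n+1} (1 + |α|)^h ≤ (1 + |α|)^(n+2) / |α|` gives the bound. -/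

open Finset

namespace PowerSeries

section Majorant

variable {K : Type*} [Field K] [LinearOrder K] [IsStrictOrderedRing K]

def Majorizes (g f : K⟦X⟧) : Prop := ∀ k, |coeff k f| ≤ coeff k g

theorem Majorizes.coeff_nonneg {g f : K⟦X⟧} (h : Majorizes g f) (k : ℕ) : 0 ≤ coeff k g :=
  (abs_nonneg _).trans (h k)

theorem Majorizes.mul {g f g' f' : K⟦X⟧} (h : Majorizes g f) (h' : Majorizes g' f') :
    Majorizes (g * g') (f * f') := fun k => by
  rw [coeff_mul, coeff_mul]
  refine (abs_sum_le_sum_abs _ _).trans (sum_le_sum fun p _ => ?_)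
  rw [abs_mul]
  exact mul_le_mul (h p.1) (h' p.2) (abs_nonneg _) (h.coeff_nonneg p.1)

theorem majorizes_one : Majorizes (1 : K⟦X⟧) 1 := fun k => by
  rw [coeff_one]; split_ifs <;> simp

theorem Majorizes.pow {g f : K⟦X⟧} (h : Majorizes g f) (n : ℕ) : Majorizes (g ^ n) (f ^ n) := by
  induction n with
  | zero => simpa using majorizes_one
  | succ n ih => simpa only [pow_succ] using ih.mul h

theorem Majorizes.prod {ι : Type*} {s : Finset ι} {g f : ι → K⟦X⟧}
    (h : ∀ l ∈ s, Majorizes (g l) (f l)) : Majorizes (∏ l ∈ s, g l) (∏ l ∈ s, f l) := by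
  induction s using Finset.cons_induction with
  | empty => simpa using majorizes_one
  | cons b s hb ih =>
    rw [prod_cons, prod_cons]
    exact (h b (mem_cons_self b s)).mul (ih fun l hl => h l (mem_cons_of_mem hl))

theorem coeff_inv_X_add_C {c : K} (hc : c ≠ 0) (k : ℕ) :
    coeff k (X + C c)⁻¹ = c⁻¹ * (-c⁻¹) ^ k := by
  have hX : constantCoeff (X + C c : K⟦X⟧) ≠ 0 := by simpa using hc
  suffices (X + C c)⁻¹ = mk fun k => c⁻¹ * (-c⁻¹) ^ k by rw [this, coeff_mk]
  rw [inv_eq_iff_mul_eq_one hX]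
  ext (_ | k)
  · simp [hc]
  · rw [mul_add, map_add, coeff_succ_mul_X, coeff_mk, coeff_mul_C, coeff_mk, coeff_one,
      if_neg k.succ_ne_zero, pow_succ]
    field_simp
    ring

theorem majorizes_inv_X_add_C {c : K} (hc : 1 ≤ |c|) :
    Majorizes (C |c|⁻¹ * mk 1) (X + C c)⁻¹ := fun k => by
  have hc0 : 0 < |c| := zero_lt_one.trans_le hc
  rw [coeff_inv_X_add_C (abs_pos.mp hc0), coeff_C_mul, coeff_mk, Pi.one_apply, mul_one, abs_mul,
    abs_pow, abs_neg, abs_inv]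
  exact mul_le_of_le_one_right (by positivity)
    (pow_le_one₀ (by positivity) (inv_le_one_of_one_le₀ hc))

theorem majorizes_prod_inv_X_add_C {ι : Type*} {t : Finset ι} {c : ι → K}
    (hc : ∀ l ∈ t, 1 ≤ |c l|) (e : ι → ℕ) :
    Majorizes (C (∏ l ∈ t, |c l|⁻¹ ^ e l) * mk 1 ^ ∑ l ∈ t, e l)
      (∏ l ∈ t, (X + C (c l))⁻¹ ^ e l) := by
  have := Majorizes.prod fun l hl => (majorizes_inv_X_add_C (hc l hl)).pow (e l)
  simpa only [mul_pow, prod_mul_distrib, prod_pow_eq_pow_sum, map_prod, map_pow] using this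

theorem coeff_mk_one_pow (W k : ℕ) :
    coeff k ((mk 1 : K⟦X⟧) ^ W) = ((W + k - 1).choose k : K) := by
  rcases W with _ | d
  · rcases k with _ | k <;> simp [coeff_one]
  · rw [mk_one_pow_eq_mk_choose_add, coeff_mk, Nat.add_right_comm, Nat.add_sub_cancel,
      Nat.choose_symm_add]

end Majorant

theorem coeff_mul_eq_of_eq_mul_add_X_pow_mul {R : Type*} [CommRing R] {N S G G' E : R⟦X⟧}
    {M k : ℕ} (hG : G * G' = 1) (h : N = S * G + X ^ M * E) (hk : k < M) :
    coeff k (N * G') = coeff k S := by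
  rw [h, add_mul, mul_assoc, hG, mul_one, map_add, mul_assoc, coeff_X_pow_mul',
    if_neg (by omega), add_zero]

end PowerSeries

namespace Nat

theorem choose_add_sub_one_le_pow_mul {W a b : ℕ} (hW : W ≤ a * b) (ha : 0 < a) (k : ℕ) :
    (W + k - 1).choose k ≤ a ^ k * (b + k - 1).choose k := by
  refine Nat.le_of_mul_le_mul_left ?_ k.factorial_pos
  rw [← ascFactorial_eq_factorial_mul_choose', mul_left_comm,
    ← ascFactorial_eq_factorial_mul_choose', ascFactorial_eq_prod_range, ascFactorial_eq_prod_range,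
    ← card_range k, ← prod_const, card_range, ← prod_mul_distrib]
  exact prod_le_prod' fun t _ => by nlinarith

theorem prod_natAbs_sub_erase_eq (n h₀ : ℕ) (hh₀ : h₀ ≤ n + 1) :
    ∏ l ∈ (range (n + 1)).erase h₀, ((h₀ : ℤ) - l).natAbs = h₀ ! * (n - h₀)! := by
  have hsplit : (range (n + 1)).erase h₀ = range h₀ ∪ Ico (h₀ + 1) (n + 1) := by
    ext l; simp only [mem_erase, mem_range, mem_union, mem_Ico]; omega
  rw [hsplit, prod_union (disjoint_left.mpr fun l hl hl' => by
    simp only [mem_range, mem_Ico] at hl hl'; omega)]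
  congr 1
  · rw [← descFactorial_self, descFactorial_eq_prod_range]
    exact prod_congr rfl fun l hl => by have := mem_range.mp hl; omega
  · rw [prod_Ico_eq_prod_range, ← prod_range_add_one_eq_factorial]
    exact prod_congr (by congr 1; omega) fun t _ => by omega

theorem factorial_le_two_pow_mul_factorial_mul_factorial (n h : ℕ) :
    n ! ≤ 2 ^ n * (h ! * (n - h)!) := by
  rcases le_or_gt h n with hh | hh
  · rw [← choose_mul_factorial_mul_factorial hh, mul_assoc]
    exact Nat.mul_le_mul_right _ (choose_le_two_pow n h)
  · rw [Nat.sub_eq_zero_of_le hh.le, factorial_zero, mul_one]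
    exact (factorial_le hh.le).trans (Nat.le_mul_of_pos_left _ (by positivity))

end Nat

section PartialFractions

variable {K ι : Type*} [Field K] [DecidableEq ι]

def IsPartialFraction (s : Finset ι) (r : ι → K) (e : ι → ℕ) (M : ℕ) (a : ι → ℕ → K) : Prop :=
  ∀ x : K, (∀ l ∈ s, x ≠ r l) →
    (∏ l ∈ s, (x - r l) ^ e l)⁻¹ = ∑ h ∈ s, ∑ j ∈ range M, a h j / (x - r h) ^ (j + 1)

variable {s : Finset ι} {r : ι → K} {e : ι → ℕ} {M : ℕ} {a : ι → ℕ → K}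

theorem IsPartialFraction.prod_pow_sub_eq (ha : IsPartialFraction s r e M a)
    (he : ∀ l ∈ s, e l ≤ M) {x : K} (hx : ∀ l ∈ s, x ≠ r l) :
    ∏ l ∈ s, (x - r l) ^ (M - e l) =
      ∑ h ∈ s, ∑ j ∈ range M, a h j * (x - r h) ^ (M - 1 - j) * ∏ l ∈ s.erase h, (x - r l) ^ M := by
  have hx' : ∀ l ∈ s, x - r l ≠ 0 := fun l hl => sub_ne_zero.mpr (hx l hl)
  have hD : ∏ l ∈ s, (x - r l) ^ (M - e l) =
      (∏ l ∈ s, (x - r l) ^ M) * (∏ l ∈ s, (x - r l) ^ e l)⁻¹ := by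
    rw [eq_mul_inv_iff_mul_eq₀ (prod_ne_zero_iff.mpr fun l hl => pow_ne_zero _ (hx' l hl)),
      ← prod_mul_distrib]
    exact prod_congr rfl fun l hl => by rw [← pow_add, Nat.sub_add_cancel (he l hl)]
  rw [hD, ha x hx, mul_sum]
  refine sum_congr rfl fun h hh => ?_
  rw [mul_sum]
  refine sum_congr rfl fun j hj => ?_
  have hjM : (x - r h) ^ M = (x - r h) ^ (j + 1) * (x - r h) ^ (M - 1 - j) := by
    rw [← pow_add]; congr 1; have := mem_range.mp hj; omega
  rw [← mul_prod_erase s _ hh, hjM]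
  field_simp [hx' h hh]

theorem IsPartialFraction.polynomial_identity [Infinite K] (ha : IsPartialFraction s r e M a)
    (he : ∀ l ∈ s, e l ≤ M) (b : K) :
    ∏ l ∈ s, (Polynomial.X + Polynomial.C (b - r l)) ^ (M - e l) =
      ∑ h ∈ s, ∑ j ∈ range M, Polynomial.C (a h j) *
        (Polynomial.X + Polynomial.C (b - r h)) ^ (M - 1 - j) *
          ∏ l ∈ s.erase h, (Polynomial.X + Polynomial.C (b - r l)) ^ M := by
  refine Polynomial.eq_of_infinite_eval_eq _ _
    ((s.finite_toSet.image (r · - b)).infinite_compl.mono fun y hy => ?_)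
  have hx : ∀ l ∈ s, y + b ≠ r l := fun l hl h => hy ⟨l, hl, by simp [← h]⟩
  simpa [Polynomial.eval_prod, Polynomial.eval_finsetSum, add_sub_assoc'] using
    ha.prod_pow_sub_eq he hx

open PowerSeries in
theorem IsPartialFraction.powerSeries_identity [Infinite K] (ha : IsPartialFraction s r e M a)
    (he : ∀ l ∈ s, e l ≤ M) (b : K) :
    ∏ l ∈ s, (X + C (b - r l)) ^ (M - e l) =
      ∑ h ∈ s, ∑ j ∈ range M, C (a h j) * (X + C (b - r h)) ^ (M - 1 - j) *
        ∏ l ∈ s.erase h, (X + C (b - r l) : K⟦X⟧) ^ M := by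
  simpa only [map_prod, map_sum, map_mul, map_pow, map_add,
    Polynomial.coeToPowerSeries.ringHom_apply, Polynomial.coe_X, Polynomial.coe_C] using
    congrArg Polynomial.coeToPowerSeries.ringHom (ha.polynomial_identity he b)

open PowerSeries in
theorem IsPartialFraction.eq_coeff [Infinite K] (ha : IsPartialFraction s r e M a)
    (hr : Set.InjOn r s) (he : ∀ l ∈ s, e l ≤ M) {h₀ : ι} (hh₀ : h₀ ∈ s) {j : ℕ} (hj : j < M) :
    a h₀ j =
      coeff (M - 1 - j) (X ^ (M - e h₀) * ∏ l ∈ s.erase h₀, (X + C (r h₀ - r l))⁻¹ ^ e l) := by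
  set u : ι → K⟦X⟧ := fun l => X + C (r h₀ - r l) with hu
  have hu₀ : u h₀ = X := by simp [hu]
  have huv : ∀ l ∈ s.erase h₀, u l * (u l)⁻¹ = 1 := fun l hl =>
    PowerSeries.mul_inv_cancel _ (by
      simpa [hu, sub_eq_zero] using
        fun h => ne_of_mem_erase hl (hr (mem_of_mem_erase hl) hh₀ h.symm))
  have hid : ∏ l ∈ s, u l ^ (M - e l) =
      ∑ h ∈ s, ∑ j ∈ range M, C (a h j) * u h ^ (M - 1 - j) * ∏ l ∈ s.erase h, u l ^ M :=
    ha.powerSeries_identity he (r h₀)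
  have hGG' : (∏ l ∈ s.erase h₀, u l ^ M) * ∏ l ∈ s.erase h₀, (u l)⁻¹ ^ M = 1 := by
    rw [← prod_mul_distrib]
    exact prod_eq_one fun l hl => by rw [← mul_pow, huv l hl, one_pow]
  -- every summand with `h ≠ h₀` contains the factor `u h₀ ^ M = X ^ M`
  have hsplit : ∏ l ∈ s, u l ^ (M - e l) =
      (∑ j ∈ range M, C (a h₀ j) * X ^ (M - 1 - j)) * ∏ l ∈ s.erase h₀, u l ^ M +
        X ^ M * ∑ h ∈ s.erase h₀, ∑ j ∈ range M, C (a h j) * u h ^ (M - 1 - j) *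
          ∏ l ∈ (s.erase h).erase h₀, u l ^ M := by
    rw [hid, ← add_sum_erase s _ hh₀, hu₀, sum_mul, mul_sum]
    congr 1
    refine sum_congr rfl fun h hh => ?_
    rw [← mul_prod_erase (s.erase h) _ (mem_erase.mpr ⟨(ne_of_mem_erase hh).symm, hh₀⟩), hu₀,
      mul_sum]
    exact sum_congr rfl fun j _ => by ring
  have hquot : (∏ l ∈ s, u l ^ (M - e l)) * ∏ l ∈ s.erase h₀, (u l)⁻¹ ^ M =
      X ^ (M - e h₀) * ∏ l ∈ s.erase h₀, (u l)⁻¹ ^ e l := by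
    rw [← mul_prod_erase s _ hh₀, hu₀, mul_assoc, ← prod_mul_distrib]
    refine congrArg _ (prod_congr rfl fun l hl => ?_)
    have hel : M = (M - e l) + e l := (Nat.sub_add_cancel (he l (mem_of_mem_erase hl))).symm
    rw [hel, pow_add, Nat.add_sub_cancel, ← mul_assoc, ← mul_pow, huv l hl, one_pow, one_mul]
  rw [← hquot, coeff_mul_eq_of_eq_mul_add_X_pow_mul hGG' hsplit (by omega), map_sum,
    sum_eq_single_of_mem j (mem_range.mpr hj)]
  · rw [coeff_C_mul_X_pow, if_pos rfl]
  · intro j' hj' _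
    rw [coeff_C_mul_X_pow, if_neg (by have := mem_range.mp hj'; omega)]

end PartialFractions

theorem IsPFD.isPartialFraction {m n : ℕ} {a : ℕ → ℕ → ℕ → ℚ} (ha : IsPFD m n a) {i : ℕ}
    (hi : 1 ≤ i) (him : i ≤ m) :
    IsPartialFraction (range (n + 2)) (Nat.cast : ℕ → ℚ) (Function.update (fun _ => m) (n + 1) i)
      m (fun h j => a i h (j + 1)) := by
  intro x hx
  rw [prod_range_succ, Function.update_self,
    prod_congr rfl fun l hl => by rw [Function.update_of_ne (mem_range.mp hl).ne]]
  exact ha i hi him x fun h hh => hx h (mem_range.mpr (by omega))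

theorem prod_abs_sub_inv_pow_le {n m h₀ : ℕ} (hh₀ : h₀ ≤ n + 1) {e : ℕ → ℕ}
    (he : ∀ l < n + 1, e l = m) :
    ∏ l ∈ (range (n + 2)).erase h₀, |(h₀ : ℚ) - l|⁻¹ ^ e l ≤ (2 ^ n / n.factorial : ℚ) ^ m := by
  set P := ∏ l ∈ (range (n + 2)).erase h₀, ((h₀ : ℤ) - l).natAbs ^ e l
  have hP : 0 < P := prod_pos fun l hl => pow_pos (Int.natAbs_pos.mpr (by
    have := ne_of_mem_erase hl; omega)) _
  have hnat : n.factorial ^ m ≤ P * (2 ^ n) ^ m :=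
    calc n.factorial ^ m ≤ ((h₀.factorial * (n - h₀).factorial) * 2 ^ n) ^ m :=
          Nat.pow_le_pow_left ((Nat.factorial_le_two_pow_mul_factorial_mul_factorial n h₀).trans_eq
            (mul_comm _ _)) m
      _ = (∏ l ∈ (range (n + 1)).erase h₀, ((h₀ : ℤ) - l).natAbs ^ e l) * (2 ^ n) ^ m := by
          rw [mul_pow, ← Nat.prod_natAbs_sub_erase_eq n h₀ hh₀, ← prod_pow]
          exact congrArg (· * _) (prod_congr rfl fun l hl => by
            rw [he l (mem_range.mp (mem_of_mem_erase hl))])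
      _ ≤ P * (2 ^ n) ^ m := Nat.mul_le_mul_right _ (prod_le_prod_of_subset_of_one_le'
          (erase_subset_erase _ (range_subset_range.mpr (by omega))) fun l hl _ =>
            Nat.one_le_pow _ _ (Int.natAbs_pos.mpr (by have := ne_of_mem_erase hl; omega)))
  have hcast : ∏ l ∈ (range (n + 2)).erase h₀, |(h₀ : ℚ) - l|⁻¹ ^ e l = (P : ℚ)⁻¹ := by
    simp only [P, Nat.cast_prod, Nat.cast_pow, Nat.cast_natAbs, prod_inv_distrib, inv_pow]
    push_cast
    rfl
  rw [hcast, div_pow, le_div_iff₀ (by positivity), inv_mul_le_iff₀ (by exact_mod_cast hP)]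
  exact_mod_cast hnat

theorem choose_le_succ_pow_mul_four_pow {W m n k : ℕ} (hW : W ≤ (n + 1) * m) (hk : k < m) :
    (W + k - 1).choose k ≤ (n + 1) ^ m * 4 ^ m :=
  calc (W + k - 1).choose k ≤ (n + 1) ^ k * (m + k - 1).choose k :=
        Nat.choose_add_sub_one_le_pow_mul hW n.succ_pos k
    _ ≤ (n + 1) ^ m * 2 ^ (2 * m) := Nat.mul_le_mul (Nat.pow_le_pow_right n.succ_pos hk.le)
        ((Nat.choose_le_two_pow _ _).trans (Nat.pow_le_pow_right two_pos (by omega)))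
    _ = (n + 1) ^ m * 4 ^ m := by rw [pow_mul]; norm_num

open PowerSeries in
theorem IsPFD.abs_le {m n : ℕ} {a : ℕ → ℕ → ℕ → ℚ} (ha : IsPFD m n a) {i h₀ j : ℕ}
    (hi : 1 ≤ i) (him : i ≤ m) (hh₀ : h₀ ≤ n + 1) (hj : j < m) :
    |a i h₀ (j + 1)| ≤ 4 ^ m * (n + 1) ^ m * (2 ^ n / n.factorial : ℚ) ^ m := by
  set e : ℕ → ℕ := Function.update (fun _ => m) (n + 1) i
  set T := (range (n + 2)).erase h₀
  have he : ∀ l, e l ≤ m := fun l => by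
    simp only [e, Function.update_apply]; split_ifs <;> omega
  have hdist : ∀ l ∈ T, 1 ≤ |(h₀ : ℚ) - l| := fun l hl => by
    have h1 : (1 : ℤ) ≤ |(h₀ : ℤ) - l| := Int.one_le_abs (by have := ne_of_mem_erase hl; omega)
    exact_mod_cast h1
  have hW : ∑ l ∈ T, e l ≤ (n + 1) * m :=
    calc ∑ l ∈ T, e l ≤ ∑ _l ∈ T, m := sum_le_sum fun l _ => he l
      _ = (n + 1) * m := by
        rw [sum_const, card_erase_of_mem (mem_range.mpr (by omega)), card_range, smul_eq_mul]; rfl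
  rw [(ha.isPartialFraction hi him).eq_coeff Nat.cast_injective.injOn (fun l _ => he l)
    (mem_range.mpr (by omega)) hj, coeff_X_pow_mul']
  split_ifs with hk
  · set k := m - 1 - j - (m - e h₀)
    calc _ ≤ (∏ l ∈ T, |(h₀ : ℚ) - l|⁻¹ ^ e l) * ((∑ l ∈ T, e l) + k - 1).choose k := by
          simpa only [coeff_C_mul, coeff_mk_one_pow] using majorizes_prod_inv_X_add_C hdist e k
      _ ≤ (2 ^ n / n.factorial : ℚ) ^ m * ((n + 1) ^ m * 4 ^ m : ℕ) := by
          gcongr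
          · exact prod_abs_sub_inv_pow_le hh₀ fun l hl => Function.update_of_ne hl.ne _ _
          · exact choose_le_succ_pow_mul_four_pow hW (by omega)
      _ = _ := by push_cast; ring
  · rw [abs_zero]; positivity

theorem norm_aeval_padeA_le (n : ℕ) (a : ℕ → ℕ → ℕ → ℚ) (i j : ℕ) (α : ℂ) :
    ‖Polynomial.aeval α (padeA n a i j)‖ ≤
      ∑ h ∈ range (n + 2), |(a i h (j + 1) : ℝ)| * (1 + ‖α‖) ^ h := by
  have hfac : ‖Polynomial.aeval α (Polynomial.C (j.factorial : ℚ)⁻¹)‖ ≤ 1 := by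
    rw [Polynomial.aeval_C, eq_ratCast, Complex.norm_ratCast]
    push_cast
    rw [abs_inv, Nat.abs_cast]
    exact inv_le_one_of_one_le₀ (by exact_mod_cast j.factorial_pos)
  rw [padeA, map_mul, norm_mul, map_sum]
  refine (mul_le_of_le_one_left (norm_nonneg _) hfac).trans
    ((norm_sum_le _ _).trans (sum_le_sum fun h _ => ?_))
  rw [map_mul, Polynomial.aeval_C, eq_ratCast, norm_mul, Complex.norm_ratCast, map_pow, norm_pow]
  gcongr
  simpa using norm_add_le 1 α

theorem geom_sum_one_add_le {A : ℝ} (hA : 0 < A) (N : ℕ) :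
    ∑ h ∈ range N, (1 + A) ^ h ≤ (1 + A) ^ N / A := by
  rw [geom_sum_eq (by linarith), add_sub_cancel_left]
  gcongr
  linarith

theorem pade_coeff_bound_general (m n : ℕ) (a : ℕ → ℕ → ℕ → ℚ)
    (ha : IsPFD m n a) (α : ℂ) (hα : α ≠ 0) :
    ∀ i j : ℕ, 1 ≤ i → i ≤ m → j ≤ m - 1 →
      ‖Polynomial.aeval α (padeA n a i j)‖ ≤
        (2 ^ m * (1 + ‖α‖) / ‖α‖) * ((n : ℝ) + 1) ^ m *
          ((1 + ‖α‖) * 2 ^ m) ^ (n + 1) / ((n.factorial : ℝ)) ^ m := by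
  intro i j hi him hj
  have hα' : 0 < ‖α‖ := norm_pos_iff.mpr hα
  set B : ℝ := 4 ^ m * (n + 1) ^ m * (2 ^ n / n.factorial) ^ m with hB_def
  have hB : ∀ h ∈ range (n + 2), |(a i h (j + 1) : ℝ)| ≤ B := fun h hh => by
    have hq := (Rat.cast_le (K := ℝ)).mpr
      (ha.abs_le (j := j) hi him (mem_range_succ_iff.mp hh) (by omega))
    push_cast at hq
    exact hq
  calc ‖Polynomial.aeval α (padeA n a i j)‖
      ≤ ∑ h ∈ range (n + 2), |(a i h (j + 1) : ℝ)| * (1 + ‖α‖) ^ h := norm_aeval_padeA_le ..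
    _ ≤ ∑ h ∈ range (n + 2), B * (1 + ‖α‖) ^ h := by gcongr with h hh; exact hB h hh
    _ = B * ∑ h ∈ range (n + 2), (1 + ‖α‖) ^ h := (mul_sum _ _ _).symm
    _ ≤ B * ((1 + ‖α‖) ^ (n + 2) / ‖α‖) := by gcongr; exact geom_sum_one_add_le hα' _
    _ = _ := by
      have hfact : (n.factorial : ℝ) ≠ 0 := by positivity
      rw [hB_def, div_pow, mul_pow (1 + ‖α‖), ← pow_mul, ← pow_mul,
        show (4 : ℝ) ^ m = 2 ^ m * 2 ^ m by rw [← mul_pow]; norm_num]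
      field_simp
      ring

/-- size estimate `|A_{i,j,n+1}(α)| ≤ (2^m(1+|α|)/|α|)·(n+1)^m·((1+|α|)2^m)^{n+1}/(n!)^m`
for nonzero complex `α`. -/
theorem pade_coeff_bound (m n : ℕ) (hm : 2 ≤ m) (a : ℕ → ℕ → ℕ → ℚ)
    (ha : IsPFD m n a) (α : ℂ) (hα : α ≠ 0) :
    ∀ i j : ℕ, 1 ≤ i → i ≤ m → j ≤ m - 1 →
      ‖Polynomial.aeval α (padeA n a i j)‖ ≤
        (2 ^ m * (1 + ‖α‖) / ‖α‖) * ((n : ℝ) + 1) ^ m *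
          ((1 + ‖α‖) * 2 ^ m) ^ (n + 1) / ((n.factorial : ℝ)) ^ m :=
  pade_coeff_bound_general m n a ha α hα
end

section
/- Let K be a field of characteristic 0, f = (1, f₁, …, f_{m−1}) ∈ K[[z]]^m, and n = (n₁, …, n_m) ∈ ℤ_{≥0}^m; put n_i = (n₁+1, n₂+1, …, n_i+1, n_{i+1}, …, n_m) for 1 ≤ i ≤ m and N = Σ_{j=1}^m (n_j + 1). For each 1 ≤ i ≤ m let (A_{i,1}(z), …, A_{i,m}(z)) ∈ K[z]^m be a weight-n_i Padé approximant of f, and define Δ(z) = det( A_{i,j}(z) )_{1≤i,j≤m}. Then there exists γ ∈ K with Δ(z) = γ·z^N. Moreover, if the indices n, n₁, …, n_m are all normal with respect to f, then γ ≠ 0. -/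
open PowerSeries Polynomial

private lemma coeff_prod_of_natDegree_le' {R : Type*} [CommSemiring R] {ι : Type*}
    (s : Finset ι) (g : ι → Polynomial R) (d : ι → ℕ)
    (h : ∀ i ∈ s, (g i).natDegree ≤ d i) :
    (∏ i ∈ s, g i).coeff (∑ i ∈ s, d i) = ∏ i ∈ s, (g i).coeff (d i) := by
  classical
  induction s using Finset.induction_on with
  | empty => simp
  | @insert a s hx ih =>
    rw [Finset.prod_insert hx, Finset.sum_insert hx,
      Polynomial.coeff_mul_add_eq_of_natDegree_le (h a (Finset.mem_insert_self a s))
        ((Polynomial.natDegree_prod_le _ _).trans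
          (Finset.sum_le_sum fun i hi => h i (Finset.mem_insert_of_mem hi))),
      ih fun i hi => h i (Finset.mem_insert_of_mem hi), Finset.prod_insert hx]

private lemma perm_eq_one_of_le {m : ℕ} (σ : Equiv.Perm (Fin m))
    (h : ∀ i : Fin m, (σ i : ℕ) ≤ (i : ℕ)) : σ = 1 := by
  have key : ∀ k : ℕ, ∀ i : Fin m, (i : ℕ) = k → σ i = i := by
    intro k
    induction k using Nat.strong_induction_on with
    | _ k ih =>
      intro i hik
      rcases lt_or_eq_of_le (h i) with hlt | heq
      · have h1 : σ (σ i) = σ i := ih (σ i : ℕ) (by omega) (σ i) rfl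
        have h2 := σ.injective h1
        rw [h2] at hlt
        omega
      · exact Fin.val_injective heq
  exact Equiv.ext fun i => (key (i : ℕ) i rfl).trans (Equiv.Perm.one_apply i).symm

/-- let `f = (1, f₁, …, f_{m−1})`, `nn` an index, and for each `i` let `A i` be a
weight-`nn_i` Padé approximant of `f`, where `nn_i` increments the first `i` entries of `nn`.
Then `Δ = det (A i j)` equals `γ · z^N` for some `γ ∈ K`, where `N = Σ_j (nn j + 1)`; and if
`nn` and all the `nn_i` are normal with respect to `f`, then `γ ≠ 0`. -/
theorem pade_det (K : Type*) [Field K] [CharZero K] (m : ℕ) (hm : 0 < m)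
    (f : Fin m → PowerSeries K) (hf0 : f ⟨0, hm⟩ = 1)
    (nn : Fin m → ℕ)
    (A : Fin m → Fin m → Polynomial K)
    (hA : ∀ i : Fin m,
      IsPadeApprox f (fun j => if (j : ℕ) ≤ (i : ℕ) then nn j + 1 else nn j) (A i)) :
    ∃ γ : K, Matrix.det (Matrix.of A) =
        Polynomial.C γ * Polynomial.X ^ (∑ j, (nn j + 1)) ∧
      ((IsNormal f nn ∧ ∀ i : Fin m,
          IsNormal f (fun j => if (j : ℕ) ≤ (i : ℕ) then nn j + 1 else nn j)) → γ ≠ 0) := by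
  classical
  set N := ∑ j, (nn j + 1) with hNdef
  have hNalt : N = (∑ j, nn j) + m := by
    rw [hNdef, Finset.sum_add_distrib]
    simp
  have hcard : ∀ i : Fin m,
      (∑ j : Fin m, if (j : ℕ) ≤ (i : ℕ) then 1 else 0) = (i : ℕ) + 1 := by
    intro i
    have hfil : Finset.univ.filter (fun j : Fin m => (j : ℕ) ≤ (i : ℕ)) = Finset.Iic i := by
      ext j
      simp only [Finset.mem_filter, Finset.mem_univ, true_and, Finset.mem_Iic, Fin.le_def]
    rw [Finset.sum_boole, hfil, Fin.card_Iic]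
    simp
  have hsumI : ∀ i : Fin m,
      (∑ j : Fin m, ((if (j : ℕ) ≤ (i : ℕ) then nn j + 1 else nn j) + 1)) = N + ((i : ℕ) + 1) := by
    intro i
    have h1 : ∀ j : Fin m, (if (j : ℕ) ≤ (i : ℕ) then nn j + 1 else nn j) + 1
        = (nn j + 1) + (if (j : ℕ) ≤ (i : ℕ) then 1 else 0) := by
      intro j
      split <;> ring
    rw [Finset.sum_congr rfl fun j _ => h1 j, Finset.sum_add_distrib, hcard i, hNdef]
  have hordR : ∀ i : Fin m,
      ((N + (i : ℕ) : ℕ) : ℕ∞) ≤ (∑ j, ((A i j : PowerSeries K)) * f j).order := by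
    intro i
    have h : (((∑ j : Fin m, ((if (j : ℕ) ≤ (i : ℕ) then nn j + 1 else nn j) + 1)) - 1 : ℕ) : ℕ∞)
        ≤ (∑ j, ((A i j : PowerSeries K)) * f j).order := (hA i).2.2
    have e : (∑ j : Fin m, ((if (j : ℕ) ≤ (i : ℕ) then nn j + 1 else nn j) + 1)) - 1
        = N + (i : ℕ) := by
      rw [hsumI i]
      omega
    rwa [e] at h
  -- degree bounds
  have hdegA : ∀ i j : Fin m,
      (A i j).natDegree ≤ (if (j : ℕ) ≤ (i : ℕ) then nn j + 1 else nn j) := by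
    intro i j
    exact Polynomial.natDegree_le_iff_degree_le.mpr ((hA i).2.1 j)
  have hdegAii : ∀ i : Fin m, (A i i).natDegree ≤ nn i + 1 := by
    intro i
    have := hdegA i i
    rwa [if_pos le_rfl] at this
  have hprodlt : ∀ σ : Equiv.Perm (Fin m), σ ≠ 1 →
      (∏ i, Matrix.of A (σ i) i).natDegree < N := by
    intro σ hσ
    obtain ⟨i₀, hi₀⟩ : ∃ i : Fin m, ¬ ((i : ℕ) ≤ (σ i : ℕ)) := by
      by_contra hc
      push_neg at hc
      apply hσ
      have hinv : σ⁻¹ = 1 := by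
        apply perm_eq_one_of_le
        intro i
        have := hc (σ⁻¹ i)
        simpa using this
      rw [← inv_inv σ, hinv, inv_one]
    calc (∏ i, Matrix.of A (σ i) i).natDegree
        ≤ ∑ i, (A (σ i) i).natDegree := Polynomial.natDegree_prod_le _ _
      _ ≤ ∑ i : Fin m, (if (i : ℕ) ≤ ((σ i) : ℕ) then nn i + 1 else nn i) :=
          Finset.sum_le_sum fun i _ => hdegA (σ i) i
      _ < N := by
          rw [hNdef]
          apply Finset.sum_lt_sum
          · intro i _
            split <;> omega
          · exact ⟨i₀, Finset.mem_univ i₀, by rw [if_neg hi₀]; omega⟩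
  -- coefficients of the determinant at degrees ≥ N
  have hcoeffdet : ∀ k, N ≤ k → (Matrix.det (Matrix.of A)).coeff k
      = if k = N then (∏ i, (A i i).coeff (nn i + 1)) else 0 := by
    intro k hk
    rw [Matrix.det_apply', Polynomial.finset_sum_coeff,
      Finset.sum_eq_single (1 : Equiv.Perm (Fin m))]
    · simp only [Equiv.Perm.sign_one, Units.val_one, Int.cast_one, one_mul,
        Equiv.Perm.one_apply]
      rcases eq_or_lt_of_le hk with h | h
      · rw [if_pos h.symm, ← h, hNdef]
        exact coeff_prod_of_natDegree_le' _ _ _ (fun i _ => hdegAii i)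
      · rw [if_neg (by omega)]
        apply Polynomial.coeff_eq_zero_of_natDegree_lt
        calc (∏ i, Matrix.of A i i).natDegree
            ≤ ∑ i, (A i i).natDegree := Polynomial.natDegree_prod_le _ _
          _ ≤ ∑ i, (nn i + 1) := Finset.sum_le_sum fun i _ => hdegAii i
          _ = N := hNdef.symm
          _ < k := h
    · intro σ _ hσ
      apply Polynomial.coeff_eq_zero_of_natDegree_lt
      calc (((Equiv.Perm.sign σ : ℤ) : K[X]) * ∏ i, Matrix.of A (σ i) i).natDegree
          ≤ (((Equiv.Perm.sign σ : ℤ) : K[X])).natDegree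
            + (∏ i, Matrix.of A (σ i) i).natDegree := Polynomial.natDegree_mul_le
        _ = (∏ i, Matrix.of A (σ i) i).natDegree := by
            rw [Polynomial.natDegree_intCast, zero_add]
        _ < N := hprodlt σ hσ
        _ ≤ k := hk
    · intro h
      exact absurd (Finset.mem_univ _) h
  -- low coefficients vanish
  have hdvd : (X : K⟦X⟧) ^ N ∣ ((Matrix.det (Matrix.of A) : K[X]) : K⟦X⟧) := by
    set φ : K[X] →+* K⟦X⟧ := Polynomial.coeToPowerSeries.ringHom with hφ
    set M' : Matrix (Fin m) (Fin m) (PowerSeries K) := (Matrix.of A).map φ with hM'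
    have hmap : ((Matrix.det (Matrix.of A) : K[X]) : K⟦X⟧) = M'.det := by
      rw [hM', ← RingHom.mapMatrix_apply, ← RingHom.map_det, hφ, Polynomial.coeToPowerSeries.ringHom_apply]
    have hcol := Matrix.det_updateCol_sum M' ⟨0, hm⟩ f
    rw [hf0, one_smul] at hcol
    have hucol : (fun k => ∑ j, f j • M' k j)
        = (fun k : Fin m => ∑ j, ((A k j : PowerSeries K)) * f j) := by
      funext k
      refine Finset.sum_congr rfl fun j _ => ?_
      simp only [smul_eq_mul, hM', Matrix.map_apply, Matrix.of_apply, hφ,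
        Polynomial.coeToPowerSeries.ringHom_apply]
      ring
    rw [hucol] at hcol
    rw [hmap, ← hcol, Matrix.det_apply']
    apply Finset.dvd_sum
    intro σ _
    apply Dvd.dvd.mul_left ?_ _
    rw [← Finset.mul_prod_erase Finset.univ _ (Finset.mem_univ (⟨0, hm⟩ : Fin m))]
    apply Dvd.dvd.mul_right
    have hentry : (M'.updateCol ⟨0, hm⟩
          (fun k : Fin m => ∑ j, ((A k j : PowerSeries K)) * f j)) (σ ⟨0, hm⟩) ⟨0, hm⟩
        = ∑ j, ((A (σ ⟨0, hm⟩) j : PowerSeries K)) * f j := by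
      simp [Matrix.updateCol_apply]
    rw [hentry, PowerSeries.X_pow_dvd_iff]
    intro d hd
    apply PowerSeries.coeff_of_lt_order
    refine lt_of_lt_of_le ?_ (hordR (σ ⟨0, hm⟩))
    exact_mod_cast (by omega : d < N + ((σ ⟨0, hm⟩ : Fin m) : ℕ))
  have hlow : ∀ k, k < N → (Matrix.det (Matrix.of A)).coeff k = 0 := by
    intro k hk
    rw [PowerSeries.X_pow_dvd_iff] at hdvd
    have h2 := hdvd k hk
    rwa [Polynomial.coeff_coe] at h2
  -- conclusion
  refine ⟨∏ i, (A i i).coeff (nn i + 1), ?_, ?_⟩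
  · ext k
    rw [Polynomial.coeff_C_mul, Polynomial.coeff_X_pow]
    rcases lt_or_ge k N with hk | hk
    · rw [hlow k hk, if_neg (by omega), mul_zero]
    · rw [hcoeffdet k hk]
      by_cases hkN : k = N <;> simp [hkN]
  · rintro ⟨hnn, hni⟩ hγ0
    obtain ⟨i, -, hi⟩ := Finset.prod_eq_zero_iff.mp hγ0
    have hdegii : (A i i).degree ≤ ((nn i : ℕ) : WithBot ℕ) := by
      rw [Polynomial.degree_le_iff_coeff_zero]
      intro d hd
      have hd' : nn i < d := by exact_mod_cast hd
      rcases eq_or_lt_of_le (Nat.succ_le_of_lt hd') with h | h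
      · exact h ▸ hi
      · exact Polynomial.coeff_eq_zero_of_natDegree_lt (lt_of_le_of_lt (hdegAii i) h)
    have hN1 : 1 ≤ N := by omega
    cases hival : (i : ℕ) with
    | zero =>
      have happ : IsPadeApprox f nn (A i) := by
        refine ⟨(hA i).1, ?_, ?_⟩
        · intro j
          by_cases hj : (j : ℕ) ≤ (i : ℕ)
          · have hji : j = i := Fin.val_injective (by omega)
            rw [hji]
            exact hdegii
          · have hthis : (A i j).degree
                ≤ ((if (j : ℕ) ≤ (i : ℕ) then nn j + 1 else nn j : ℕ) : WithBot ℕ) :=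
              (hA i).2.1 j
            rwa [if_neg hj] at hthis
        · refine le_trans ?_ (hordR i)
          rw [← hNdef]
          exact_mod_cast (by omega : N - 1 ≤ N + (i : ℕ))
      have hcontr := hnn (A i) happ
      rw [← hNdef] at hcontr
      have h1 := hordR i
      rw [hcontr] at h1
      have h2 : N + (i : ℕ) ≤ N - 1 := by exact_mod_cast h1
      omega
    | succ k =>
      have hik : k < m := by
        have := i.isLt
        omega
      set i' : Fin m := ⟨k, hik⟩ with hi'def
      have hi'val : ((i' : Fin m) : ℕ) = k := rfl
      have happ : IsPadeApprox f
          (fun j => if (j : ℕ) ≤ ((i' : Fin m) : ℕ) then nn j + 1 else nn j) (A i) := by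
        refine ⟨(hA i).1, ?_, ?_⟩
        · intro j
          simp only [hi'def]
          by_cases hj : (j : ℕ) ≤ k
          · rw [if_pos hj]
            have hthis : (A i j).degree
                ≤ ((if (j : ℕ) ≤ (i : ℕ) then nn j + 1 else nn j : ℕ) : WithBot ℕ) :=
              (hA i).2.1 j
            rwa [if_pos (by omega)] at hthis
          · rw [if_neg hj]
            by_cases hj2 : (j : ℕ) = k + 1
            · have hji : j = i := Fin.val_injective (by omega)
              rw [hji]
              exact hdegii
            · have hthis : (A i j).degree
                  ≤ ((if (j : ℕ) ≤ (i : ℕ) then nn j + 1 else nn j : ℕ) : WithBot ℕ) :=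
                (hA i).2.1 j
              rwa [if_neg (by omega)] at hthis
        · have e : (∑ j : Fin m, ((if (j : ℕ) ≤ ((i' : Fin m) : ℕ) then nn j + 1 else nn j) + 1)) - 1
              = N + k := by
            rw [hsumI i']
            omega
          rw [e]
          refine le_trans ?_ (hordR i)
          exact_mod_cast (by omega : N + k ≤ N + (i : ℕ))
      have hcontr := hni i' (A i) happ
      have e : (∑ j : Fin m, ((if (j : ℕ) ≤ ((i' : Fin m) : ℕ) then nn j + 1 else nn j) + 1)) - 1
          = N + k := by
        rw [hsumI i']
        omega
      rw [e] at hcontr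
      have h1 := hordR i
      rw [hcontr] at h1
      have h2 : N + (i : ℕ) ≤ N + k := by exact_mod_cast h1
      omega
end

section
/- Let m ≥ 2 and n ≥ 0 be integers, and let A_{i,j,n+1}(z) (1 ≤ i ≤ m, 0 ≤ j ≤ m−1) be the polynomials from the Padé construction for powers of log. Put Δ^{(n+1)}(z) = det( A_{i,j,n+1}(z) )_{1≤i≤m, 0≤j≤m−1}. Then there exists γ ∈ ℚ \ {0} such that Δ^{(n+1)}(z) = γ · z^{m(n+1)}. In particular, Δ^{(n+1)}(α) ≠ 0 for every nonzero algebraic number α. -/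
/-!
Put `N = m(n+1)`. Every entry of `M = (A_{i,j,n+1})` has degree `≤ n+1`, so `Δ = det M` has
degree `≤ N`, and its coefficient of `z^N` is the determinant of the leading coefficients
`a_{n+1,j+1}^{(i)}/j!`. Expanding `1/Q_{m,i,n+1}` at its pole `x = n+1`, where it has order
exactly `i`, gives `a_{n+1,j+1}^{(i)} = 0` for `j ≥ i` and `a_{n+1,i}^{(i)} ≠ 0`: that matrix is
triangular with nonzero diagonal.

For `z^N ∣ Δ`, substitute `z = e^t - 1`. Then `Σ_j t^j A_{i,j,n+1}(e^t - 1)` equals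
`Σ_{h,j} a_{h,j+1}^{(i)} t^j e^{ht}/j!`, the Borel transform of the expansion of `1/Q_{m,i,n+1}(x)`
at `x = ∞`; as `1/Q_{m,i,n+1}(x) = O(x^{-N-i})`, it is `O(t^N)`. Adding `t^j` times column `j` to
column `0` does not change the determinant, so `t^N ∣ Δ(e^t - 1)`, and `e^t - 1 = t · (unit)`.
-/

open Finset Polynomial

namespace Matrix

variable {ι R : Type*} [Fintype ι] [DecidableEq ι] [CommRing R]

theorem dvd_det_updateCol {c : R} {v : ι → R} (hv : ∀ k, c ∣ v k) (A : Matrix ι ι R) (j : ι) :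
    c ∣ (A.updateCol j v).det := by
  choose w hw using hv
  rw [show v = c • w from funext hw, det_updateCol_smul]
  exact dvd_mul_right _ _

theorem natDegree_det_le {M : Matrix ι ι R[X]} {d : ℕ} (h : ∀ i j, (M i j).natDegree ≤ d) :
    M.det.natDegree ≤ Fintype.card ι * d := by
  rw [det_apply]
  refine natDegree_sum_le_of_forall_le _ _ fun σ _ => ?_
  rw [Units.smul_def, zsmul_eq_mul]
  refine natDegree_mul_le.trans ?_
  rw [natDegree_intCast, zero_add]
  refine (natDegree_prod_le _ _).trans ?_
  simpa using Finset.sum_le_card_nsmul univ _ d fun i _ => h (σ i) i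

theorem coeff_det_of_natDegree_le {M : Matrix ι ι R[X]} {d : ℕ}
    (h : ∀ i j, (M i j).natDegree ≤ d) :
    M.det.coeff (Fintype.card ι * d) = (M.map (coeff · d)).det := by
  simp only [det_apply, finsetSum_coeff, Units.smul_def, zsmul_eq_mul, map_apply]
  refine Finset.sum_congr rfl fun σ _ => ?_
  rw [← C_eq_intCast, coeff_C_mul, ← card_univ,
    coeff_prod_of_natDegree_le univ (fun i => M (σ i) i) d fun i _ => h (σ i) i]

end Matrix

namespace Polynomial

theorem eq_C_mul_X_pow_of_X_pow_dvd {R : Type*} [CommRing R] {p : R[X]} {N : ℕ}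
    (hdvd : X ^ N ∣ p) (hdeg : p.natDegree ≤ N) : p = C (p.coeff N) * X ^ N := by
  ext k
  rw [coeff_C_mul_X_pow]
  split_ifs with hk
  · rw [hk]
  · rcases lt_or_gt_of_ne hk with hlt | hgt
    · exact X_pow_dvd_iff.mp hdvd k hlt
    · exact coeff_eq_zero_of_natDegree_lt (hdeg.trans_lt hgt)

theorem coeff_sum_C_mul_X_pow_sub {R : Type*} [Semiring R] (b : ℕ → R) {m j : ℕ} (hj : j < m) :
    (∑ l ∈ range m, C (b l) * X ^ (m - 1 - l)).coeff (m - 1 - j) = b j := by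
  rw [finsetSum_coeff, sum_eq_single j]
  · simp
  · intro l hl hlj
    rw [coeff_C_mul_X_pow, if_neg (by have := mem_range.mp hl; omega)]
  · simp [hj]

theorem X_pow_dvd_and_coeff_ne_zero {K : Type*} [Field K] {P G : K[X]} {e m : ℕ} (he : e < m)
    (hG : G.coeff 0 ≠ 0) (h : X ^ m ∣ X ^ e - P * G) : X ^ e ∣ P ∧ P.coeff e ≠ 0 := by
  have hXG : ¬ X ∣ G := by rwa [X_dvd_iff]
  have hPG : X ^ e ∣ P * G := (dvd_sub_right dvd_rfl).mp ((pow_dvd_pow X he.le).trans h)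
  obtain ⟨P', rfl⟩ := prime_X.pow_dvd_of_dvd_mul_right e hXG hPG
  refine ⟨dvd_mul_right _ _, ?_⟩
  obtain ⟨R, hR⟩ := h
  have h1 : P' * G + X ^ (m - e) * R = 1 := by
    rw [← Nat.add_sub_cancel' he.le, pow_add, mul_assoc] at hR
    refine (mul_left_cancel₀ (pow_ne_zero e X_ne_zero) ?_).symm
    linear_combination hR
  have h0 := congrArg (coeff · 0) h1
  simp only [coeff_add, mul_coeff_zero, coeff_X_pow, coeff_one_zero,
    if_neg (Nat.sub_ne_zero_of_lt he).symm, zero_mul, add_zero] at h0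
  rw [coeff_X_pow_mul', if_pos le_rfl, Nat.sub_self]
  exact left_ne_zero_of_mul_eq_one h0

theorem X_pow_dvd_of_X_pow_dvd_aeval {R : Type*} [CommRing R] [IsDomain R] {u : PowerSeries R}
    (hu : IsUnit u) {k : ℕ} {p : R[X]} (h : PowerSeries.X ^ k ∣ aeval (PowerSeries.X * u) p) :
    X ^ k ∣ p := by
  induction k generalizing p with
  | zero => exact one_dvd p
  | succ k ih =>
    have hsplit := X_mul_divX_add p
    rw [← hsplit] at h
    simp only [map_add, map_mul, aeval_X, aeval_C] at h
    have hc : p.coeff 0 = 0 := by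
      have hX : PowerSeries.X ∣ PowerSeries.C (p.coeff 0) :=
        (dvd_add_right (dvd_mul_of_dvd_left (dvd_mul_right _ _) _)).mp
          ((dvd_pow_self _ k.succ_ne_zero).trans h)
      simpa [PowerSeries.X_dvd_iff] using hX
    rw [hc, map_zero, add_zero, pow_succ', mul_assoc,
      mul_dvd_mul_iff_left PowerSeries.X_ne_zero, hu.dvd_mul_left] at h
    rw [← hsplit, hc, map_zero, add_zero, pow_succ']
    exact mul_dvd_mul_left X (ih h)

end Polynomial

namespace PowerSeries

theorem exists_isUnit_exp_sub_one_eq_X_mul (A : Type*) [CommRing A] [Algebra ℚ A] :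
    ∃ u : PowerSeries A, IsUnit u ∧ exp A - 1 = X * u := by
  obtain ⟨u, hu⟩ : X ∣ exp A - 1 := by simp [X_dvd_iff]
  refine ⟨u, ?_, hu⟩
  have h1 := congrArg (coeff 1) hu
  rw [coeff_succ_X_mul, coeff_zero_eq_constantCoeff_apply] at h1
  simp [isUnit_iff_constantCoeff, ← h1, coeff_exp]

theorem mk_pow_mul_choose_mul_one_sub_C_mul_X_pow {S : Type*} [CommRing S] (c : S) (d : ℕ) :
    (mk fun k => c ^ k * (d + k).choose d) * (1 - C c * X) ^ (d + 1) = 1 := by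
  have h := congrArg (rescale c) (mk_add_choose_mul_one_sub_pow_eq_one (S := S) (d := d))
  rwa [map_mul, map_pow, map_sub, map_one, rescale_X, rescale_mk] at h

end PowerSeries

theorem natDegree_padeA_le (n : ℕ) (a : ℕ → ℕ → ℕ → ℚ) (i j : ℕ) :
    (padeA n a i j).natDegree ≤ n + 1 := by
  refine natDegree_C_mul_le _ _ |>.trans <| natDegree_sum_le_of_forall_le _ _ fun h hh => ?_
  refine natDegree_C_mul_le _ _ |>.trans <| natDegree_pow_le.trans ?_
  rw [add_comm, ← C_1, natDegree_X_add_C, mul_one]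
  exact Nat.le_of_lt_succ (mem_range.mp hh)

theorem coeff_padeA_succ (n : ℕ) (a : ℕ → ℕ → ℕ → ℚ) (i j : ℕ) :
    (padeA n a i j).coeff (n + 1) = (j.factorial : ℚ)⁻¹ * a i (n + 1) (j + 1) := by
  rw [padeA, coeff_C_mul, finsetSum_coeff, sum_range_succ, sum_eq_zero fun h hh => ?_]
  · simp [coeff_one_add_X_pow]
  · rw [coeff_C_mul, coeff_one_add_X_pow, Nat.choose_eq_zero_of_lt (mem_range.mp hh),
      Nat.cast_zero, mul_zero]

theorem coeff_sum_X_pow_mul_aeval_padeA (m n : ℕ) (a : ℕ → ℕ → ℕ → ℚ) (i k : ℕ) :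
    PowerSeries.coeff k (∑ j ∈ range m,
        PowerSeries.X ^ j * aeval (PowerSeries.exp ℚ - 1) (padeA n a i j)) =
      (k.factorial : ℚ)⁻¹ *
        ∑ h ∈ range (n + 2), ∑ j ∈ range m, a i h (j + 1) * k.choose j * (h : ℚ) ^ (k - j) := by
  have haeval : ∀ j, aeval (PowerSeries.exp ℚ - 1) (padeA n a i j) =
      PowerSeries.C (j.factorial : ℚ)⁻¹ * ∑ h ∈ range (n + 2),
        PowerSeries.C (a i h (j + 1)) * PowerSeries.rescale (h : ℚ) (PowerSeries.exp ℚ) := by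
    intro j
    simp [padeA, ← PowerSeries.exp_pow_eq_rescale_exp]
  rw [map_sum, sum_comm, mul_sum, sum_congr rfl fun j _ => ?_]
  rw [PowerSeries.coeff_X_pow_mul', haeval]
  split_ifs with hjk
  · simp only [PowerSeries.coeff_C_mul, map_sum, PowerSeries.coeff_rescale, PowerSeries.coeff_exp,
      mul_sum, Nat.cast_choose ℚ hjk, Algebra.algebraMap_self, RingHom.id_apply]
    refine sum_congr rfl fun h _ => ?_
    field_simp
  · simp [Nat.choose_eq_zero_of_lt (not_le.mp hjk)]

namespace IsPFD

variable {m n : ℕ} {a : ℕ → ℕ → ℕ → ℚ}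

theorem clear_denominators (ha : IsPFD m n a) {i : ℕ} (hi : 1 ≤ i) (him : i ≤ m) :
    (X - C ((n + 1 : ℕ) : ℚ)) ^ (m - i) =
      ∑ h ∈ range (n + 2), ∑ j ∈ range m, C (a i h (j + 1)) *
        ((X - C (h : ℚ)) ^ (m - 1 - j) *
          ∏ h' ∈ (range (n + 2)).erase h, (X - C (h' : ℚ)) ^ m) := by
  refine eq_of_infinite_eval_eq _ _
    ((((range (n + 2)).image ((↑) : ℕ → ℚ)).finite_toSet.infinite_compl).mono fun x hx => ?_)
  have hx' : ∀ h : ℕ, h ≤ n + 1 → x ≠ h := fun h hh hxh =>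
    hx (by simpa using ⟨h, by omega, hxh.symm⟩)
  have hsub : ∀ h ∈ range (n + 2), x - h ≠ 0 := fun h hh =>
    sub_ne_zero.mpr (hx' h (by simpa [Nat.lt_succ_iff] using hh))
  have hQ : ∏ h ∈ range (n + 2), (x - h) ^ m = (x - ((n + 1 : ℕ) : ℚ)) ^ (m - i) *
      ((∏ h ∈ range (n + 1), (x - h) ^ m) * (x - ((n + 1 : ℕ) : ℚ)) ^ i) := by
    rw [mul_left_comm, ← pow_add, Nat.sub_add_cancel him, ← prod_range_succ]
  have hterm : ∀ h ∈ range (n + 2), ∀ j ∈ range m,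
      (∏ h ∈ range (n + 2), (x - h) ^ m) * (a i h (j + 1) / (x - h) ^ (j + 1)) =
      a i h (j + 1) * ((x - h) ^ (m - 1 - j) * ∏ h' ∈ (range (n + 2)).erase h, (x - h') ^ m) := by
    intro h hh j hj
    have hsplit : (x - h) ^ m = (x - h) ^ (m - 1 - j) * (x - h) ^ (j + 1) := by
      rw [← pow_add]; congr 1; have := mem_range.mp hj; omega
    rw [← mul_prod_erase _ _ hh, hsplit]
    field_simp [hsub h hh]
  have hpfd := congrArg ((∏ h ∈ range (n + 2), (x - h) ^ m) * ·) (ha i hi him x hx')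
  simp only [mul_sum] at hpfd
  rw [sum_congr rfl fun h hh => sum_congr rfl (hterm h hh), hQ, mul_inv_cancel_right₀] at hpfd
  · simpa [eval_finsetSum, eval_prod] using hpfd
  · exact mul_ne_zero (prod_ne_zero_iff.mpr fun h hh =>
      pow_ne_zero _ (hsub h (range_subset_range.mpr (by omega) hh)))
      (pow_ne_zero _ (hsub (n + 1) (self_mem_range_succ _)))

theorem coeff_at_last_pole (ha : IsPFD m n a) {i : ℕ} (hi : 1 ≤ i) (him : i ≤ m) :
    (∀ j, i ≤ j → j < m → a i (n + 1) (j + 1) = 0) ∧ a i (n + 1) i ≠ 0 := by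
  set c : ℚ := ((n + 1 : ℕ) : ℚ)
  set P : ℚ[X] := ∑ j ∈ range m, C (a i (n + 1) (j + 1)) * X ^ (m - 1 - j)
  set G : ℚ[X] := ∏ h ∈ range (n + 1), (X + C (c - h)) ^ m
  have hpole : (X - C c) ^ m ∣ (X - C c) ^ (m - i) -
      P.comp (X - C c) * ∏ h ∈ range (n + 1), (X - C (h : ℚ)) ^ m := by
    rw [ha.clear_denominators hi him, sum_range_succ, range_add_one (n := n + 1),
      erase_insert notMem_range_self, add_sub_assoc]
    have hP : P.comp (X - C c) * ∏ h ∈ range (n + 1), (X - C (h : ℚ)) ^ m =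
        ∑ j ∈ range m, C (a i (n + 1) (j + 1)) *
          ((X - C c) ^ (m - 1 - j) * ∏ h ∈ range (n + 1), (X - C (h : ℚ)) ^ m) := by
      simp [P, Polynomial.sum_comp, sum_mul, mul_assoc]
    rw [hP, sub_self, add_zero]
    refine dvd_sum fun h hh => dvd_sum fun j _ => dvd_mul_of_dvd_right (dvd_mul_of_dvd_right
      (dvd_prod_of_mem _ (mem_erase.mpr ⟨?_, mem_insert_self _ _⟩)) _) _
    exact (ne_of_lt (mem_range.mp hh)).symm
  have hshift : X ^ m ∣ X ^ (m - i) - P * G := by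
    have h := map_dvd (compRingHom (X + C c)) hpole
    simpa [G, comp_assoc, Polynomial.prod_comp, sub_add_eq_add_sub, add_sub_assoc] using h
  have hG : G.coeff 0 ≠ 0 := by
    rw [coeff_zero_eq_eval_zero]
    simp only [G, eval_prod, eval_pow, eval_add, eval_X, eval_C, zero_add]
    exact prod_ne_zero_iff.mpr fun h hh => pow_ne_zero _ (sub_ne_zero.mpr
      (Nat.cast_injective.ne (ne_of_lt (mem_range.mp hh)).symm))
  obtain ⟨hdvd, hne⟩ := X_pow_dvd_and_coeff_ne_zero (by omega) hG hshift
  refine ⟨fun j hij hjm => ?_, ?_⟩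
  · rw [← show P.coeff (m - 1 - j) = a i (n + 1) (j + 1) from
      coeff_sum_C_mul_X_pow_sub (fun l => a i (n + 1) (l + 1)) hjm]
    exact X_pow_dvd_iff.mp hdvd _ (by omega)
  · have hdiag := coeff_sum_C_mul_X_pow_sub (fun l => a i (n + 1) (l + 1))
      (show i - 1 < m by omega)
    rw [show m - 1 - (i - 1) = m - i by omega, Nat.sub_add_cancel hi] at hdiag
    rwa [← hdiag]

/-- `clear_denominators` at `x = 1/y`, multiplied by `y ^ (m * (n + 2))`. -/
theorem clear_denominators_reflect (ha : IsPFD m n a) {i : ℕ} (hi : 1 ≤ i) (him : i ≤ m) :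
    X ^ (m * (n + 1) + i) * (1 - C ((n + 1 : ℕ) : ℚ) * X) ^ (m - i) =
      ∑ h ∈ range (n + 2), ∑ j ∈ range m, C (a i h (j + 1)) *
        (X ^ (j + 1) * (1 - C (h : ℚ) * X) ^ (m - 1 - j) *
          ∏ h' ∈ (range (n + 2)).erase h, (1 - C (h' : ℚ) * X) ^ m) := by
  refine eq_of_infinite_eval_eq _ _ ((Set.finite_singleton 0).infinite_compl.mono fun y hy => ?_)
  have hy : y ≠ 0 := hy
  have hflip : ∀ c : ℚ, 1 - c * y = y * (y⁻¹ - c) := fun c => by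
    rw [mul_sub, mul_inv_cancel₀ hy, mul_comm]
  have hdeg : m * (n + 2) = m * (n + 1) + m := by ring
  have h := congrArg (fun p => y ^ (m * (n + 2)) * eval y⁻¹ p) (ha.clear_denominators hi him)
  simp only [eval_pow, eval_sub, eval_X, eval_C, eval_finsetSum, eval_mul, eval_prod, mul_sum] at h
  simp only [Set.mem_ofPred_eq, eval_pow, eval_sub, eval_X, eval_C, eval_finsetSum, eval_mul,
    eval_prod, eval_one, hflip, mul_pow, prod_mul_distrib, prod_const]
  convert h using 1
  · rw [← mul_assoc, ← pow_add]
    congr 2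
    omega
  · refine sum_congr rfl fun h hh => sum_congr rfl fun j hj => ?_
    rw [card_erase_of_mem hh, card_range, show n + 2 - 1 = n + 1 by omega, ← pow_mul]
    have hj : j < m := mem_range.mp hj
    rw [show m * (n + 2) = (j + 1) + (m - 1 - j) + m * (n + 1) by omega, pow_add, pow_add]
    ring

theorem moment_eq_zero (ha : IsPFD m n a) {i : ℕ} (hi : 1 ≤ i) (him : i ≤ m) {k : ℕ}
    (hk : k < m * (n + 1)) :
    ∑ h ∈ range (n + 2), ∑ j ∈ range m, a i h (j + 1) * k.choose j * (h : ℚ) ^ (k - j) = 0 := by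
  -- `W h j = (1 - h y)⁻¹ ^ (j + 1)`, so `S = 1 / Q_{m,i,n+1}(1/y)`
  let W (h j : ℕ) : PowerSeries ℚ := PowerSeries.mk fun d => (h : ℚ) ^ d * (j + d).choose j
  let S := ∑ h ∈ range (n + 2), ∑ j ∈ range m,
    PowerSeries.C (a i h (j + 1)) * (PowerSeries.X ^ (j + 1) * W h j)
  let U := ∏ h ∈ range (n + 2), (1 - PowerSeries.C (h : ℚ) * PowerSeries.X) ^ m
  have hU : IsUnit U := by simp [U, PowerSeries.isUnit_iff_constantCoeff]
  have hSU : S * U = PowerSeries.X ^ (m * (n + 1) + i) *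
      (1 - PowerSeries.C ((n + 1 : ℕ) : ℚ) * PowerSeries.X) ^ (m - i) := by
    have h := congrArg (coeToPowerSeries.ringHom (R := ℚ)) (ha.clear_denominators_reflect hi him)
    simp only [map_mul, map_pow, map_sum, map_sub, map_one, map_prod,
      coeToPowerSeries.ringHom_apply, coe_X, coe_C] at h
    rw [h, sum_mul]
    refine sum_congr rfl fun h hh => ?_
    rw [sum_mul]
    refine sum_congr rfl fun j hj => ?_
    have hsplit : (1 - PowerSeries.C (h : ℚ) * PowerSeries.X) ^ m =
        (1 - PowerSeries.C (h : ℚ) * PowerSeries.X) ^ (j + 1) *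
          (1 - PowerSeries.C (h : ℚ) * PowerSeries.X) ^ (m - 1 - j) := by
      rw [← pow_add]; congr 1; have := mem_range.mp hj; omega
    simp only [U, W]
    rw [← mul_prod_erase _ _ hh, hsplit]
    linear_combination (PowerSeries.C (a i h (j + 1)) * PowerSeries.X ^ (j + 1) *
      (1 - PowerSeries.C (h : ℚ) * PowerSeries.X) ^ (m - 1 - j) * ∏ h' ∈ (range (n + 2)).erase h,
        (1 - PowerSeries.C (h' : ℚ) * PowerSeries.X) ^ m) *
      PowerSeries.mk_pow_mul_choose_mul_one_sub_C_mul_X_pow (h : ℚ) j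
  have hS : PowerSeries.X ^ (m * (n + 1) + i) ∣ S := hU.dvd_mul_right.mp (hSU ▸ dvd_mul_right _ _)
  have hcoeff := PowerSeries.X_pow_dvd_iff.mp hS (k + 1) (by omega)
  simp only [S, W, map_sum, PowerSeries.coeff_C_mul, PowerSeries.coeff_X_pow_mul',
    PowerSeries.coeff_mk] at hcoeff
  rw [← hcoeff]
  refine sum_congr rfl fun h _ => sum_congr rfl fun j _ => ?_
  rcases le_or_gt j k with hjk | hjk
  · rw [if_pos (by omega), show k + 1 - (j + 1) = k - j by omega, Nat.add_sub_cancel' hjk]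
    ring
  · rw [if_neg (by omega), Nat.choose_eq_zero_of_lt hjk]
    simp

theorem X_pow_dvd_sum_X_pow_mul_aeval_padeA (ha : IsPFD m n a) {i : ℕ} (hi : 1 ≤ i)
    (him : i ≤ m) :
    PowerSeries.X ^ (m * (n + 1)) ∣
      ∑ j ∈ range m, PowerSeries.X ^ j * aeval (PowerSeries.exp ℚ - 1) (padeA n a i j) :=
  PowerSeries.X_pow_dvd_iff.mpr fun k hk => by
    rw [coeff_sum_X_pow_mul_aeval_padeA, ha.moment_eq_zero hi him hk, mul_zero]

theorem X_pow_dvd_det_padeA (ha : IsPFD m n a) :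
    X ^ (m * (n + 1)) ∣ (Matrix.of fun i j : Fin m => padeA n a ((i : ℕ) + 1) (j : ℕ)).det := by
  obtain _ | m := m
  · simp
  obtain ⟨u, hu, hexp⟩ := PowerSeries.exists_isUnit_exp_sub_one_eq_X_mul ℚ
  refine X_pow_dvd_of_X_pow_dvd_aeval hu ?_
  rw [← hexp, AlgHom.map_det]
  have hcol := Matrix.det_updateCol_sum ((aeval (PowerSeries.exp ℚ - 1)).mapMatrix
    (Matrix.of fun i j : Fin (m + 1) => padeA n a ((i : ℕ) + 1) (j : ℕ))) 0
    fun j => PowerSeries.X ^ (j : ℕ)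
  rw [Fin.val_zero, pow_zero, one_smul] at hcol
  rw [← hcol]
  refine Matrix.dvd_det_updateCol (fun k => ?_) _ _
  simpa [Fin.sum_univ_eq_sum_range (fun j => PowerSeries.X ^ j *
    aeval (PowerSeries.exp ℚ - 1) (padeA n a ((k : ℕ) + 1) j))] using
    ha.X_pow_dvd_sum_X_pow_mul_aeval_padeA (i := k + 1) (by omega) k.isLt

theorem coeff_det_padeA_ne_zero (ha : IsPFD m n a) :
    (Matrix.of fun i j : Fin m => padeA n a ((i : ℕ) + 1) (j : ℕ)).det.coeff (m * (n + 1)) ≠ 0 := by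
  have hcoeff := Matrix.coeff_det_of_natDegree_le
    (M := Matrix.of fun i j : Fin m => padeA n a ((i : ℕ) + 1) (j : ℕ)) (d := n + 1)
    fun i j => natDegree_padeA_le n a _ _
  rw [Fintype.card_fin] at hcoeff
  rw [hcoeff, Matrix.det_of_isLowerTriangular]
  · refine prod_ne_zero_iff.mpr fun i _ => ?_
    simp only [Matrix.map_apply, Matrix.of_apply, coeff_padeA_succ]
    exact mul_ne_zero (by positivity) (ha.coeff_at_last_pole (by omega) i.isLt).2
  · intro i j hij
    simp only [Matrix.map_apply, Matrix.of_apply, coeff_padeA_succ]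
    rw [(ha.coeff_at_last_pole (by omega) i.isLt).1 j hij j.isLt, mul_zero]

end IsPFD

theorem pade_det_log_general (m n : ℕ) (a : ℕ → ℕ → ℕ → ℚ) (ha : IsPFD m n a) :
    ∃ γ : ℚ, γ ≠ 0 ∧
      Matrix.det (Matrix.of fun i j : Fin m => padeA n a ((i : ℕ) + 1) (j : ℕ)) =
        Polynomial.C γ * Polynomial.X ^ (m * (n + 1)) ∧
      ∀ α : ℂ, α ≠ 0 → IsAlgebraic ℚ α →
        Polynomial.aeval α
            (Matrix.det (Matrix.of fun i j : Fin m => padeA n a ((i : ℕ) + 1) (j : ℕ))) ≠ 0 := by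
  have hdvd := ha.X_pow_dvd_det_padeA
  have hdeg := Matrix.natDegree_det_le fun i j : Fin m => natDegree_padeA_le n a ((i : ℕ) + 1) j
  rw [Fintype.card_fin] at hdeg
  have hform := eq_C_mul_X_pow_of_X_pow_dvd hdvd hdeg
  refine ⟨_, ha.coeff_det_padeA_ne_zero, hform, fun α hα _ => ?_⟩
  rw [hform]
  simp [hα, ha.coeff_det_padeA_ne_zero]

/-- the determinant `Δ^{(n+1)}(z) = det(A_{i,j,n+1}(z))` equals `γ·z^{m(n+1)}`
for some nonzero rational `γ`; in particular it does not vanish at any nonzero algebraic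
number. -/
theorem pade_det_log (m n : ℕ) (hm : 2 ≤ m) (a : ℕ → ℕ → ℕ → ℚ) (ha : IsPFD m n a) :
    ∃ γ : ℚ, γ ≠ 0 ∧
      Matrix.det (Matrix.of fun i j : Fin m => padeA n a ((i : ℕ) + 1) (j : ℕ)) =
        Polynomial.C γ * Polynomial.X ^ (m * (n + 1)) ∧
      ∀ α : ℂ, α ≠ 0 → IsAlgebraic ℚ α →
        Polynomial.aeval α
            (Matrix.det (Matrix.of fun i j : Fin m => padeA n a ((i : ℕ) + 1) (j : ℕ))) ≠ 0 :=
  pade_det_log_general m n a ha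
end
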